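/- arXiv:2412.01128 — 5 statements merged into one kernel-verified Lean document; each statement's English description precedes it below -/
import Mathlib

section
/- For every fixed natural number t, the sequence n ↦ S(n, n−t) is polynomial in n of degree exactly 2t: there exists a polynomial P ∈ ℚ[X] with deg P = 2t such that S(n, n−t) = P(n) for every natural number n > t. -/
open Finset

variable {α β : Type*} [DecidableEq α] [DecidableEq β]

/-- Map a finpartition along an embedding. -/
def Finpartition.mapEmb (f : α ↪ β) {s : Finset α} (P : Finpartition s) :
    Finpartition (s.map f) where
  parts := P.parts.image (Finset.map f)
  supIndep := by
    rw [Finset.supIndep_iff_pairwiseDisjoint]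
    intro x hx y hy hxy
    simp only [coe_image, Set.mem_image, mem_coe] at hx hy
    obtain ⟨x', hx', rfl⟩ := hx
    obtain ⟨y', hy', rfl⟩ := hy
    have hne : x' ≠ y' := by rintro rfl; exact hxy rfl
    have := P.disjoint hx' hy' hne
    simp only [Function.onFun, id] at this ⊢
    rwa [Finset.disjoint_map]
  sup_parts := by
    ext y
    simp only [Finset.mem_sup, mem_image, Finset.mem_map]
    constructor
    · rintro ⟨c, ⟨c', hc', rfl⟩, hy⟩
      simp only [id, Finset.mem_map] at hy
      obtain ⟨x, hx, rfl⟩ := hy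
      have : x ∈ s := P.le hc' hx
      exact ⟨x, this, rfl⟩
    · rintro ⟨x, hx, rfl⟩
      rw [← P.sup_parts, Finset.mem_sup] at hx
      obtain ⟨c, hc, hxc⟩ := hx
      exact ⟨c.map f, ⟨c, hc, rfl⟩, Finset.mem_map_of_mem f hxc⟩
  bot_notMem := by
    simp only [bot_eq_empty, mem_image]
    rintro ⟨c, hc, h⟩
    rw [Finset.map_eq_empty] at h
    subst h
    exact P.bot_notMem hc

@[simp] lemma Finpartition.mapEmb_parts (f : α ↪ β) {s : Finset α} (P : Finpartition s) :
    (P.mapEmb f).parts = P.parts.image (Finset.map f) := rfl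

lemma Finpartition.mapEmb_bijective (f : α ↪ β) (s : Finset α) :
    Function.Bijective (Finpartition.mapEmb f (s := s)) := by
  constructor
  · intro P Q h
    have := congrArg Finpartition.parts h
    simp only [mapEmb_parts] at this
    exact Finpartition.ext ((Finset.image_injective (Finset.map_injective f)) this)
  · intro Q
    classical
    have hsub : ∀ c ∈ Q.parts, c ⊆ s.map f := fun c hc => Q.le hc
    have hmp : ∀ c ∈ Q.parts, (c.preimage f f.injective.injOn).map f = c := by
      intro c hc
      rw [Finset.map_eq_image, Finset.image_preimage]
      apply Finset.filter_true_of_mem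
      intro x hx
      obtain ⟨y, _, rfl⟩ := Finset.mem_map.1 (hsub c hc hx)
      exact ⟨y, rfl⟩
    refine ⟨⟨Q.parts.image (fun c => c.preimage f f.injective.injOn), ?_, ?_, ?_⟩, ?_⟩
    · rw [Finset.supIndep_iff_pairwiseDisjoint]
      intro x hx y hy hxy
      simp only [coe_image, Set.mem_image, mem_coe] at hx hy
      obtain ⟨x', hx', rfl⟩ := hx
      obtain ⟨y', hy', rfl⟩ := hy
      have hne : x' ≠ y' := by rintro rfl; exact hxy rfl
      have := Q.disjoint hx' hy' hne
      simp only [Function.onFun, id] at this ⊢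
      rw [Finset.disjoint_left] at this ⊢
      intro u hu hu'
      rw [Finset.mem_preimage] at hu hu'
      exact this hu hu'
    · ext x
      simp only [Finset.mem_sup, mem_image, id]
      constructor
      · rintro ⟨c, ⟨c', hc', rfl⟩, hx⟩
        rw [Finset.mem_preimage] at hx
        have : f x ∈ s.map f := hsub c' hc' hx
        rw [Finset.mem_map] at this
        obtain ⟨y, hy, hyx⟩ := this
        rwa [← f.injective hyx]
      · intro hx
        have : f x ∈ s.map f := Finset.mem_map_of_mem f hx
        rw [← Q.sup_parts, Finset.mem_sup] at this
        obtain ⟨c, hc, hfc⟩ := this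
        exact ⟨c.preimage f f.injective.injOn, ⟨c, hc, rfl⟩, Finset.mem_preimage.2 hfc⟩
    · simp only [bot_eq_empty, mem_image]
      rintro ⟨c, hc, h⟩
      have := hmp c hc
      rw [h] at this
      simp at this
      rw [← this] at hc; exact Q.bot_notMem hc
    · apply Finpartition.ext
      simp only [mapEmb_parts]
      rw [Finset.image_image]
      ext c
      simp only [mem_image, Function.comp]
      constructor
      · rintro ⟨c', hc', rfl⟩
        rwa [hmp c' hc']
      · intro hc
        exact ⟨c, hc, hmp c hc⟩

lemma Finpartition.card_mapEmb (f : α ↪ β) {s : Finset α} (P : Finpartition s) :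
    (P.mapEmb f).parts.card = P.parts.card := by
  rw [mapEmb_parts]
  exact Finset.card_image_of_injective _ (Finset.map_injective f)

/-- Counting finpartitions with a given number of parts is invariant under embeddings. -/
lemma card_finpartition_mapEmb (f : α ↪ β) (s : Finset α) (k : ℕ) :
    Nat.card {P : Finpartition (s.map f) // P.parts.card = k}
      = Nat.card {P : Finpartition s // P.parts.card = k} := by
  refine (Nat.card_congr (Equiv.ofBijective
    (fun P : {P : Finpartition s // P.parts.card = k} =>
      (⟨P.1.mapEmb f, by rw [Finpartition.card_mapEmb]; exact P.2⟩ :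
        {P : Finpartition (s.map f) // P.parts.card = k})) ?_)).symm
  constructor
  · intro P Q h
    exact Subtype.ext ((Finpartition.mapEmb_bijective f s).1 (congrArg Subtype.val h))
  · rintro ⟨Q, hQ⟩
    obtain ⟨P, rfl⟩ := (Finpartition.mapEmb_bijective f s).2 Q
    exact ⟨⟨P, by rwa [Finpartition.card_mapEmb] at hQ⟩, rfl⟩

lemma Finpartition.avoid_parts_of_mem {s : Finset α} (Q : Finpartition s) {b : Finset α}
    (hb : b ∈ Q.parts) : (Q.avoid b).parts = Q.parts.erase b := by
  ext c
  rw [Finpartition.mem_avoid, mem_erase]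
  constructor
  · rintro ⟨d, hd, hdb, rfl⟩
    have hne : d ≠ b := fun h => hdb (h ▸ le_refl b)
    have hdisj : Disjoint d b := Q.disjoint hd hb hne
    rw [Finset.sdiff_eq_self_of_disjoint hdisj]
    refine ⟨hne, hd⟩
  · rintro ⟨hne, hc⟩
    have hdisj : Disjoint c b := Q.disjoint hc hb hne
    refine ⟨c, hc, ?_, Finset.sdiff_eq_self_of_disjoint hdisj⟩
    intro hle
    have : c = ∅ := Finset.subset_empty.1 (fun x hx => (Finset.disjoint_left.1 hdisj hx (hle hx)).elim)
    rw [this] at hc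
    exact Q.bot_notMem hc

section Ins
variable {s : Finset α} {a : α}

/-- Extend a partition of `s.erase a` by the singleton part `{a}`. -/
def Finpartition.extendSingleton (Q : Finpartition (s.erase a)) (ha : a ∈ s) :
    Finpartition s :=
  Q.extend (b := {a}) (by simp) (by simp [Finset.disjoint_singleton_right])
    (by rw [sup_eq_union, Finset.union_comm, ← Finset.insert_eq, Finset.insert_erase ha])

@[simp] lemma Finpartition.extendSingleton_parts (Q : Finpartition (s.erase a)) (ha : a ∈ s) :
    (Q.extendSingleton ha).parts = insert {a} Q.parts := rfl

lemma Finpartition.not_mem_of_subset_erase {Q : Finpartition (s.erase a)} {b : Finset α}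
    (hb : b ∈ Q.parts) : a ∉ b := fun h => (Finset.notMem_erase a s) (Q.le hb h)

/-- Insert `a` into the part `b` of a partition of `s.erase a`. -/
def Finpartition.insPart (Q : Finpartition (s.erase a)) (ha : a ∈ s) (b : Finset α)
    (hb : b ∈ Q.parts) : Finpartition s :=
  (Q.avoid b).extend (b := insert a b)
    (by simp)
    (by
      rw [Finset.disjoint_right]
      intro x hx hx'
      rw [Finset.mem_insert] at hx
      rw [Finset.mem_sdiff, Finset.mem_erase] at hx'
      rcases hx with rfl | hx
      · exact hx'.1.1 rfl
      · exact hx'.2 hx)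
    (by
      ext x
      simp only [sup_eq_union, Finset.mem_union, Finset.mem_sdiff, Finset.mem_erase,
        Finset.mem_insert]
      constructor
      · rintro (⟨⟨_, hx⟩, _⟩ | (rfl | hx))
        · exact hx
        · exact ha
        · exact Finset.mem_of_mem_erase (Q.le hb hx)
      · intro hx
        by_cases hxa : x = a
        · exact Or.inr (Or.inl hxa)
        · by_cases hxb : x ∈ b
          · exact Or.inr (Or.inr hxb)
          · exact Or.inl ⟨⟨hxa, hx⟩, hxb⟩)

lemma Finpartition.insPart_parts (Q : Finpartition (s.erase a)) (ha : a ∈ s) (b : Finset α)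
    (hb : b ∈ Q.parts) :
    (Q.insPart ha b hb).parts = insert (insert a b) (Q.parts.erase b) := by
  show insert (insert a b) (Q.avoid b).parts = _
  rw [Q.avoid_parts_of_mem hb]

lemma Finpartition.singleton_not_mem_insPart (Q : Finpartition (s.erase a)) (ha : a ∈ s)
    (b : Finset α) (hb : b ∈ Q.parts) : ({a} : Finset α) ∉ (Q.insPart ha b hb).parts := by
  rw [Q.insPart_parts ha b hb, Finset.mem_insert]
  rintro (h | h)
  · obtain ⟨x, hx⟩ := Q.nonempty_of_mem_parts hb
    have hxa : x ≠ a := fun hxa => Finpartition.not_mem_of_subset_erase hb (hxa ▸ hx)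
    have : x ∈ ({a} : Finset α) := h ▸ Finset.mem_insert_of_mem hx
    exact hxa (Finset.mem_singleton.1 this)
  · exact Finpartition.not_mem_of_subset_erase (Finset.mem_of_mem_erase h) (Finset.mem_singleton_self a)

lemma Finpartition.singleton_mem_extendSingleton (Q : Finpartition (s.erase a)) (ha : a ∈ s) :
    ({a} : Finset α) ∈ (Q.extendSingleton ha).parts := Finset.mem_insert_self _ _

lemma Finpartition.singleton_not_mem_parts_of_erase (Q : Finpartition (s.erase a)) :
    ({a} : Finset α) ∉ Q.parts := fun h => Finpartition.not_mem_of_subset_erase h (Finset.mem_singleton_self a)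

lemma Finpartition.extendSingleton_card (Q : Finpartition (s.erase a)) (ha : a ∈ s) :
    (Q.extendSingleton ha).parts.card = Q.parts.card + 1 := by
  rw [extendSingleton_parts, Finset.card_insert_of_notMem (Q.singleton_not_mem_parts_of_erase)]

lemma Finpartition.insert_not_mem_erase (Q : Finpartition (s.erase a)) (b : Finset α) :
    insert a b ∉ Q.parts.erase b := fun h =>
  Finpartition.not_mem_of_subset_erase (Finset.mem_of_mem_erase h) (Finset.mem_insert_self a b)

lemma Finpartition.insPart_card (Q : Finpartition (s.erase a)) (ha : a ∈ s) (b : Finset α)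
    (hb : b ∈ Q.parts) : (Q.insPart ha b hb).parts.card = Q.parts.card := by
  rw [Q.insPart_parts ha b hb, Finset.card_insert_of_notMem (Q.insert_not_mem_erase b),
    Finset.card_erase_of_mem hb]
  have : 0 < Q.parts.card := Finset.card_pos.2 ⟨b, hb⟩
  omega

lemma Finpartition.insPart_part_a (Q : Finpartition (s.erase a)) (ha : a ∈ s) (b : Finset α)
    (hb : b ∈ Q.parts) : (Q.insPart ha b hb).part a = insert a b := by
  refine ((Q.insPart ha b hb).part_eq_of_mem ?_ (Finset.mem_insert_self a b))
  rw [Q.insPart_parts ha b hb]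
  exact Finset.mem_insert_self _ _

@[simp] lemma Finpartition.parts_copy' {x y : Finset α} (P : Finpartition x) (h : x = y) :
    (P.copy h).parts = P.parts := rfl

lemma Finpartition.exists_eq_extendSingleton (P : Finpartition s) (ha : a ∈ s)
    (h : ({a} : Finset α) ∈ P.parts) :
    ∃ Q : Finpartition (s.erase a), Q.parts.card + 1 = P.parts.card ∧
      Q.extendSingleton ha = P := by
  refine ⟨(P.avoid {a}).copy (Finset.sdiff_singleton_eq_erase a s), ?_, ?_⟩
  · rw [parts_copy', P.avoid_parts_of_mem h, Finset.card_erase_of_mem h]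
    have : 0 < P.parts.card := Finset.card_pos.2 ⟨_, h⟩
    omega
  · apply Finpartition.ext
    rw [extendSingleton_parts, parts_copy', P.avoid_parts_of_mem h, Finset.insert_erase h]

lemma Finpartition.exists_eq_insPart (P : Finpartition s) (ha : a ∈ s)
    (h : ({a} : Finset α) ∉ P.parts) :
    ∃ (Q : Finpartition (s.erase a)) (b : Finset α) (hb : b ∈ Q.parts),
      Q.parts.card = P.parts.card ∧ Q.insPart ha b hb = P := by
  set b' := P.part a with hb'def
  have hb' : b' ∈ P.parts := P.part_mem.2 ha
  have haB : a ∈ b' := P.mem_part ha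
  have hne : b' ≠ {a} := fun hh => h (hh ▸ hb')
  have hbne : b'.erase a ≠ ∅ := by
    rw [Ne, Finset.erase_eq_empty_iff]
    rintro (hh | hh)
    · exact P.bot_notMem (by rw [Finset.bot_eq_empty, ← hh]; exact hb')
    · exact hne hh
  set Q := (P.avoid {a}).copy (Finset.sdiff_singleton_eq_erase a s) with hQdef
  have hnotmem : b'.erase a ∉ P.parts.erase b' := by
    intro hmem
    obtain ⟨x, hx⟩ := Finset.nonempty_iff_ne_empty.2 hbne
    have hcne : b'.erase a ≠ b' := Finset.ne_of_mem_erase hmem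
    have := P.disjoint (Finset.mem_of_mem_erase hmem) hb' hcne
    exact Finset.disjoint_left.1 this hx (Finset.mem_of_mem_erase hx)
  have hQparts : Q.parts = insert (b'.erase a) (P.parts.erase b') := by
    rw [hQdef, parts_copy']
    ext c
    rw [Finpartition.mem_avoid, Finset.mem_insert, Finset.mem_erase]
    constructor
    · rintro ⟨d, hd, hdle, rfl⟩
      rw [Finset.sdiff_singleton_eq_erase]
      by_cases had : a ∈ d
      · exact Or.inl (congrArg (·.erase a) (P.part_eq_of_mem hd had).symm)
      · right
        rw [Finset.erase_eq_of_notMem had]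
        exact ⟨fun hh => had (hh ▸ haB), hd⟩
    · rintro (rfl | ⟨hcne, hc⟩)
      · refine ⟨b', hb', ?_, Finset.sdiff_singleton_eq_erase a b'⟩
        intro hle
        rcases Finset.subset_singleton_iff.1 hle with hh | hh
        · exact P.bot_notMem (by rw [Finset.bot_eq_empty, ← hh]; exact hb')
        · exact hne hh
      · have hac : a ∉ c := fun hac => hcne (P.part_eq_of_mem hc hac).symm
        refine ⟨c, hc, ?_, ?_⟩
        · intro hle
          rcases Finset.subset_singleton_iff.1 hle with hh | hh
          · exact P.bot_notMem (by rw [Finset.bot_eq_empty, ← hh]; exact hc)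
          · exact h (hh ▸ hc)
        · rw [Finset.sdiff_singleton_eq_erase, Finset.erase_eq_of_notMem hac]
  have hbQ : b'.erase a ∈ Q.parts := hQparts ▸ Finset.mem_insert_self _ _
  refine ⟨Q, b'.erase a, hbQ, ?_, ?_⟩
  · rw [hQparts, Finset.card_insert_of_notMem hnotmem, Finset.card_erase_of_mem hb']
    have : 0 < P.parts.card := Finset.card_pos.2 ⟨_, hb'⟩
    omega
  · apply Finpartition.ext
    rw [Finpartition.insPart_parts, hQparts, Finset.erase_insert hnotmem,
      Finset.insert_erase haB, Finset.insert_erase hb']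

lemma key_recurrence (s : Finset α) {a : α} (ha : a ∈ s) (k : ℕ) :
    Nat.card {P : Finpartition s // P.parts.card = k + 1} =
      (k + 1) * Nat.card {Q : Finpartition (s.erase a) // Q.parts.card = k + 1}
        + Nat.card {Q : Finpartition (s.erase a) // Q.parts.card = k} := by
  classical
  set TK1 := {Q : Finpartition (s.erase a) // Q.parts.card = k + 1}
  set TK := {Q : Finpartition (s.erase a) // Q.parts.card = k}
  set Dom := ((Σ Q : TK1, {b // b ∈ Q.1.parts}) ⊕ TK)
  let Ψ : Dom → {P : Finpartition s // P.parts.card = k + 1} := fun x =>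
    match x with
    | Sum.inl ⟨⟨Q, hQ⟩, ⟨b, hb⟩⟩ => ⟨Q.insPart ha b hb, by rw [Q.insPart_card ha b hb]; exact hQ⟩
    | Sum.inr ⟨Q, hQ⟩ => ⟨Q.extendSingleton ha, by rw [Q.extendSingleton_card ha, hQ]⟩
  have hbij : Function.Bijective Ψ := by
    constructor
    · rintro (⟨⟨Q₁, hQ₁⟩, ⟨b₁, hb₁⟩⟩ | ⟨Q₁, hQ₁⟩) (⟨⟨Q₂, hQ₂⟩, ⟨b₂, hb₂⟩⟩ | ⟨Q₂, hQ₂⟩) h <;>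
        have h' := congrArg Subtype.val h <;> simp only [Ψ] at h'
      · have hpart := congrArg (fun P => Finpartition.part P a) h'
        simp only [Finpartition.insPart_part_a] at hpart
        have hab₁ : a ∉ b₁ := Finpartition.not_mem_of_subset_erase hb₁
        have hab₂ : a ∉ b₂ := Finpartition.not_mem_of_subset_erase hb₂
        have hbb : b₁ = b₂ := by
          rw [← Finset.erase_insert hab₁, ← Finset.erase_insert hab₂, hpart]
        subst hbb
        have hparts := congrArg Finpartition.parts h'
        rw [Q₁.insPart_parts ha b₁ hb₁, Q₂.insPart_parts ha b₁ hb₂] at hparts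
        have herase := congrArg (fun x => Finset.erase x (insert a b₁)) hparts
        simp only [Finset.erase_insert (Q₁.insert_not_mem_erase b₁),
          Finset.erase_insert (Q₂.insert_not_mem_erase b₁)] at herase
        have hQQ : Q₁ = Q₂ := by
          apply Finpartition.ext
          rw [← Finset.insert_erase hb₁, herase, Finset.insert_erase hb₂]
        subst hQQ
        rfl
      · exfalso
        have h1 : ({a} : Finset α) ∉ (Q₁.insPart ha b₁ hb₁).parts :=
          Q₁.singleton_not_mem_insPart ha b₁ hb₁
        rw [h'] at h1
        exact h1 (Q₂.singleton_mem_extendSingleton ha)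
      · exfalso
        have h1 : ({a} : Finset α) ∉ (Q₂.insPart ha b₂ hb₂).parts :=
          Q₂.singleton_not_mem_insPart ha b₂ hb₂
        rw [← h'] at h1
        exact h1 (Q₁.singleton_mem_extendSingleton ha)
      · have hparts := congrArg Finpartition.parts h'
        rw [Q₁.extendSingleton_parts ha, Q₂.extendSingleton_parts ha] at hparts
        have herase := congrArg (fun x => Finset.erase x {a}) hparts
        simp only [Finset.erase_insert Q₁.singleton_not_mem_parts_of_erase,
          Finset.erase_insert Q₂.singleton_not_mem_parts_of_erase] at herase
        have hQQ : Q₁ = Q₂ := Finpartition.ext herase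
        subst hQQ
        rfl
    · rintro ⟨P, hP⟩
      by_cases h : ({a} : Finset α) ∈ P.parts
      · obtain ⟨Q, hcard, hQP⟩ := P.exists_eq_extendSingleton ha h
        exact ⟨Sum.inr ⟨Q, by omega⟩, Subtype.ext hQP⟩
      · obtain ⟨Q, b, hb, hcard, hQP⟩ := P.exists_eq_insPart ha h
        exact ⟨Sum.inl ⟨⟨Q, by omega⟩, ⟨b, hb⟩⟩, Subtype.ext hQP⟩
  rw [← Nat.card_eq_of_bijective Ψ hbij]
  rw [Nat.card_sum]
  congr 1
  have e1 : (Σ Q : TK1, {b // b ∈ Q.1.parts}) ≃ TK1 × Fin (k + 1) :=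
    (Equiv.sigmaCongrRight fun Q => (Q.1.parts.equivFin).trans (finCongr Q.2)).trans
      (Equiv.sigmaEquivProd TK1 (Fin (k + 1)))
  rw [Nat.card_congr e1, Nat.card_prod, Nat.card_eq_fintype_card (α := Fin (k+1)),
    Fintype.card_fin, mul_comm]

noncomputable def stirling2 (n t : ℕ) : ℕ :=
  Nat.card {P : Finpartition (Finset.univ : Finset (Fin n)) // P.parts.card = t}

lemma univ_erase_last (n : ℕ) :
    (Finset.univ : Finset (Fin (n + 1))).erase (Fin.last n)
      = Finset.univ.map Fin.castSuccEmb := by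
  ext x
  simp only [Finset.mem_erase, Finset.mem_univ, and_true, Finset.mem_map, Finset.mem_univ,
    true_and]
  constructor
  · intro hx
    rcases Fin.eq_castSucc_or_eq_last x with ⟨y, rfl⟩ | rfl
    · exact ⟨y, rfl⟩
    · exact absurd rfl hx
  · rintro ⟨y, rfl⟩
    exact (Fin.castSucc_lt_last y).ne

lemma stirling2_recurrence (n k : ℕ) :
    stirling2 (n + 1) (k + 1) = (k + 1) * stirling2 n (k + 1) + stirling2 n k := by
  have h := key_recurrence (Finset.univ : Finset (Fin (n + 1)))
    (Finset.mem_univ (Fin.last n)) k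
  rw [show ((Finset.univ : Finset (Fin (n + 1))).erase (Fin.last n))
      = Finset.univ.map Fin.castSuccEmb from univ_erase_last n] at h
  rw [card_finpartition_mapEmb, card_finpartition_mapEmb] at h
  exact h

lemma stirling2_self (n : ℕ) : stirling2 n n = 1 := by
  classical
  rw [stirling2]
  have hbot : ((⊥ : Finpartition (Finset.univ : Finset (Fin n))).parts).card = n := by
    rw [Finpartition.parts_bot, Finset.card_map, Finset.card_univ, Fintype.card_fin]
  rw [Nat.card_eq_one_iff_unique]
  constructor
  · constructor
    rintro ⟨P, hP⟩ ⟨P', hP'⟩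
    have huniq : ∀ (R : Finpartition (Finset.univ : Finset (Fin n))), R.parts.card = n →
        R.parts = Finset.univ.map ⟨singleton, Finset.singleton_injective⟩ := by
      intro R hR
      have hsum : ∑ b ∈ R.parts, b.card = n := by
        rw [R.sum_card_parts, Finset.card_univ, Fintype.card_fin]
      have hone : ∀ b ∈ R.parts, b.card = 1 := by
        have h1 : ∀ b ∈ R.parts, 1 ≤ b.card := fun b hb =>
          Finset.card_pos.2 (R.nonempty_of_mem_parts hb)
        have hs : ∑ b ∈ R.parts, 1 = ∑ b ∈ R.parts, b.card := by
          rw [hsum, Finset.sum_const, smul_eq_mul, mul_one, hR]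
        intro b hb
        exact ((Finset.sum_eq_sum_iff_of_le h1).1 hs b hb).symm
      ext c
      simp only [Finset.mem_map, Function.Embedding.coeFn_mk, Finset.mem_univ, true_and]
      constructor
      · intro hc
        obtain ⟨x, hx⟩ := Finset.card_eq_one.1 (hone c hc)
        exact ⟨x, hx.symm⟩
      · rintro ⟨x, rfl⟩
        have hx : x ∈ (Finset.univ : Finset (Fin n)) := Finset.mem_univ x
        have hmem : R.part x ∈ R.parts := R.part_mem.2 hx
        obtain ⟨y, hy⟩ := Finset.card_eq_one.1 (hone _ hmem)
        have : x ∈ R.part x := R.mem_part hx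
        rw [hy] at this
        rw [Finset.mem_singleton.1 this, ← hy]
        exact hmem
    exact Subtype.ext (Finpartition.ext ((huniq P hP).trans (huniq P' hP').symm))
  · exact ⟨⟨⊥, hbot⟩⟩

open Polynomial in
lemma bernoulli_coeff_self (n : ℕ) : (Polynomial.bernoulli n).coeff n = 1 := by
  rw [Polynomial.bernoulli, Polynomial.finset_sum_coeff]
  rw [Finset.sum_eq_single 0]
  · simp
  · intro i hi hi0
    rw [Polynomial.coeff_monomial, if_neg]
    rw [Finset.mem_range] at hi
    omega
  · simp

open Polynomial in
lemma bernoulli_natDegree (n : ℕ) : (Polynomial.bernoulli n).natDegree = n := by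
  refine le_antisymm ?_ (Polynomial.le_natDegree_of_ne_zero (by
    rw [bernoulli_coeff_self]; exact one_ne_zero))
  apply Polynomial.natDegree_sum_le_of_forall_le
  intro i hi
  refine (Polynomial.natDegree_monomial_le _).trans ?_
  omega

open Polynomial in
lemma exists_antideriv (p : ℚ[X]) (hp : p ≠ 0) :
    ∃ q : ℚ[X], q.natDegree = p.natDegree + 1 ∧
      q.leadingCoeff = p.leadingCoeff / (p.natDegree + 1) ∧
      ∀ x : ℚ, q.eval (x + 1) - q.eval x = p.eval x := by
  set d := p.natDegree with hd
  set q : ℚ[X] := ∑ m ∈ range (d + 1),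
    C (p.coeff m / (m + 1)) * Polynomial.bernoulli (m + 1) with hq
  have hcoeff : q.coeff (d + 1) = p.leadingCoeff / (d + 1) := by
    rw [hq, Polynomial.finset_sum_coeff, Finset.sum_eq_single d]
    · rw [Polynomial.coeff_C_mul, bernoulli_coeff_self, mul_one, Polynomial.leadingCoeff]
    · intro m hm hmd
      rw [Finset.mem_range] at hm
      have hz : (Polynomial.bernoulli (m + 1)).coeff (d + 1) = 0 :=
        Polynomial.coeff_eq_zero_of_natDegree_lt (by rw [bernoulli_natDegree]; omega)
      rw [Polynomial.coeff_C_mul, hz, mul_zero]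
    · intro h
      exact absurd (Finset.self_mem_range_succ d) h
  have hlc : p.leadingCoeff / ((d : ℚ) + 1) ≠ 0 := by
    apply div_ne_zero (Polynomial.leadingCoeff_ne_zero.2 hp)
    positivity
  have hdegle : q.natDegree ≤ d + 1 := by
    apply Polynomial.natDegree_sum_le_of_forall_le
    intro m hm
    refine (Polynomial.natDegree_C_mul_le _ _).trans ?_
    rw [bernoulli_natDegree]
    rw [Finset.mem_range] at hm
    omega
  have hdeg : q.natDegree = d + 1 :=
    le_antisymm hdegle (Polynomial.le_natDegree_of_ne_zero (hcoeff ▸ hlc))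
  refine ⟨q, hdeg, ?_, ?_⟩
  · rw [Polynomial.leadingCoeff, hdeg, hcoeff]
  · intro x
    rw [hq, Polynomial.eval_finset_sum, Polynomial.eval_finset_sum, ← Finset.sum_sub_distrib]
    rw [Polynomial.eval_eq_sum_range (x := x), ← hd]
    apply Finset.sum_congr rfl
    intro m _
    simp only [Polynomial.eval_mul, Polynomial.eval_C]
    rw [← mul_sub]
    rw [add_comm x 1, Polynomial.bernoulli_eval_one_add]
    have : ((m : ℚ) + 1) ≠ 0 := by positivity
    push_cast
    field_simp
    ring

theorem stirling_aux (t : ℕ) : ∃ P : Polynomial ℚ, P.natDegree = 2 * t ∧ 0 < P.leadingCoeff ∧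
    ∀ n : ℕ, t < n → (stirling2 n (n - t) : ℚ) = P.eval (n : ℚ) := by
  induction t with
  | zero =>
    refine ⟨1, by simp, by simp, ?_⟩
    intro n _
    rw [Nat.sub_zero, stirling2_self]
    simp
  | succ t ih =>
    obtain ⟨P, hdeg, hlc, hval⟩ := ih
    have hP0 : P ≠ 0 := Polynomial.leadingCoeff_ne_zero.1 hlc.ne'
    set r : Polynomial ℚ := (Polynomial.X - Polynomial.C (t : ℚ)) * P with hr
    have hr0 : r ≠ 0 := mul_ne_zero (Polynomial.X_sub_C_ne_zero _) hP0
    have hrdeg : r.natDegree = 2 * t + 1 := by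
      rw [hr, Polynomial.natDegree_mul (Polynomial.X_sub_C_ne_zero _) hP0,
        Polynomial.natDegree_X_sub_C, hdeg]
      omega
    have hrlc : r.leadingCoeff = P.leadingCoeff := by
      rw [hr, Polynomial.leadingCoeff_mul, Polynomial.leadingCoeff_X_sub_C, one_mul]
    obtain ⟨q, hqdeg, hqlc, hqdiff⟩ := exists_antideriv r hr0
    rw [hrdeg] at hqdeg
    have hq0 : q ≠ 0 := by
      intro h
      rw [h, Polynomial.natDegree_zero] at hqdeg
      omega
    have hreval : ∀ x : ℚ, r.eval x = (x - t) * P.eval x := by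
      intro x
      rw [hr]
      simp [Polynomial.eval_mul, Polynomial.eval_sub]
    set c : ℚ := (stirling2 (t + 2) 1 : ℚ) - q.eval ((t : ℚ) + 2) with hc
    have hqc0 : 0 < q.natDegree := by omega
    refine ⟨q + Polynomial.C c, ?_, ?_, ?_⟩
    · rw [Polynomial.natDegree_add_C, hqdeg]
      ring
    · have hdlt : (Polynomial.C c).degree < q.degree := by
        refine lt_of_le_of_lt Polynomial.degree_C_le ?_
        rw [Polynomial.degree_eq_natDegree hq0, hqdeg]
        exact_mod_cast Nat.succ_pos _
      have : (q + Polynomial.C c).leadingCoeff = q.leadingCoeff := by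
        rw [add_comm]
        exact Polynomial.leadingCoeff_add_of_degree_lt hdlt
      rw [this, hqlc, hrlc]
      apply div_pos hlc
      positivity
    · have hval' : ∀ n : ℕ, t + 2 ≤ n →
          (stirling2 n (n - (t + 1)) : ℚ) = (q + Polynomial.C c).eval (n : ℚ) := by
        refine Nat.le_induction ?_ ?_
        · have : t + 2 - (t + 1) = 1 := by omega
          rw [this, Polynomial.eval_add, Polynomial.eval_C, hc]
          push_cast
          ring
        · intro n hn IH
          have ht1n : t + 1 ≤ n := by omega
          have hrec := stirling2_recurrence n (n - (t + 1))
          have h1 : n - (t + 1) + 1 = n - t := by omega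
          have h2 : n + 1 - (t + 1) = n - (t + 1) + 1 := by omega
          rw [h2, hrec, h1]
          have hPn : (stirling2 n (n - t) : ℚ) = P.eval (n : ℚ) := hval n (by omega)
          push_cast [hPn, IH]
          have hq := hqdiff (n : ℚ)
          have hcast : ((n - t : ℕ) : ℚ) = (n : ℚ) - t := by
            push_cast [Nat.cast_sub (by omega : t ≤ n)]
            ring
          rw [hcast]
          simp only [Polynomial.eval_add, Polynomial.eval_C]
          rw [hreval] at hq
          linarith [hq]
      intro n hn
      exact hval' n (by omega)

/-- For every fixed `t`, the sequence `n ↦ S(n, n - t)` is polynomial in `n` of degree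
exactly `2 * t`: there is a rational polynomial `P` with `natDegree P = 2 * t` such that
`S(n, n - t) = P(n)` for all `n > t`. -/
theorem stirling_diag_polynomial (t : ℕ) :
    ∃ P : Polynomial ℚ, P.natDegree = 2 * t ∧
      ∀ n : ℕ, t < n → (stirling2 n (n - t) : ℚ) = P.eval (n : ℚ) := by
  obtain ⟨P, h1, _, h3⟩ := stirling_aux t
  exact ⟨P, h1, h3⟩
end Ins
end

section
/- Fix integers k ≥ 1 and t ≥ 0. There exists a polynomial P ∈ ℚ[X] of degree at most 2t such that for all n with nk > t, the number of ray partitions Q of type K = (k, …, k) (n copies of k) with length ℓ(Q) = nk − t is at most P(n). -/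
/-- A ray partition of type `K = (k, …, k)` (`n` copies of `k`): a partition of the
table `T_K` (realized as `Fin n × Fin k` with the lexicographic order) into nonempty
parts, together with, for each part `B`, a linear order on `B` (realized as an
enumeration `Fin B.card ≃ B`) whose least element is the lexicographic minimum of `B`. -/
structure VRayPartition (n k : ℕ) where
  /-- the underlying partition of the table into (automatically nonempty) parts -/
  parts : Finpartition (Finset.univ : Finset (Fin n × Fin k))
  /-- a total order on each part, given as an enumeration of its elements -/
  enum : (B : Finset (Fin n × Fin k)) → B ∈ parts.parts → (Fin B.card ≃ {x // x ∈ B})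
  /-- the first element of the enumeration of each part is the lexicographic minimum
  of that part -/
  enum_min : ∀ (B : Finset (Fin n × Fin k)) (hB : B ∈ parts.parts)
    (h0 : 0 < B.card), ∀ y ∈ B,
      ((enum B hB ⟨0, h0⟩ : {x // x ∈ B}) : Fin n × Fin k).1 < y.1 ∨
      (((enum B hB ⟨0, h0⟩ : {x // x ∈ B}) : Fin n × Fin k).1 = y.1 ∧
        ((enum B hB ⟨0, h0⟩ : {x // x ∈ B}) : Fin n × Fin k).2 ≤ y.2)

namespace VRayPartition

variable {n k : ℕ}

/-- The length `ℓ(Q)` of a ray partition: its number of parts. -/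
def length (Q : VRayPartition n k) : ℕ := Q.parts.parts.card

/-- The generating relation for agility: two parts are related if they contain
elements `(i,j)` and `(i,j′)` with the same first coordinate and different second
coordinates. -/
def agilityRel (Q : VRayPartition n k)
    (B B' : {s // s ∈ Q.parts.parts}) : Prop :=
  ∃ x ∈ B.1, ∃ y ∈ B'.1, x.1 = y.1 ∧ x.2 ≠ y.2

/-- The agility `a(Q)` of a ray partition: the number of equivalence classes of the
equivalence relation on the set of parts generated by `agilityRel`. -/
noncomputable def agility (Q : VRayPartition n k) : ℕ :=
  Nat.card (Quot Q.agilityRel)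

/-- The index of `x` in the enumeration of its part, as a `Fin`. -/
def idxFin (Q : VRayPartition n k) (x : Fin n × Fin k) : Fin (Q.parts.part x).card :=
  (Q.enum (Q.parts.part x) (Q.parts.part_mem.mpr (Finset.mem_univ x))).symm
    ⟨x, Q.parts.mem_part (Finset.mem_univ x)⟩

/-- The index of `x` in the enumeration of its part. -/
def idxFn (Q : VRayPartition n k) (x : Fin n × Fin k) : ℕ := (idxFin Q x : ℕ)

/-- The predecessor of `x` in the enumeration of its part, if any. -/
def predFn (Q : VRayPartition n k) (x : Fin n × Fin k) : Option (Fin n × Fin k) :=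
  if _ : idxFn Q x = 0 then none
  else some ((Q.enum (Q.parts.part x) (Q.parts.part_mem.mpr (Finset.mem_univ x))
      ⟨idxFn Q x - 1, Nat.lt_of_le_of_lt (Nat.sub_le _ _) (idxFin Q x).isLt⟩ :
    {y // y ∈ Q.parts.part x}) : Fin n × Fin k)

lemma idx_eq (Q : VRayPartition n k) {B} (hB : B ∈ Q.parts.parts) {x} (hx : x ∈ B) :
    idxFn Q x = ((Q.enum B hB).symm ⟨x, hx⟩ : ℕ) := by
  have h : Q.parts.part x = B := Q.parts.part_eq_of_mem hB hx
  subst h; rfl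

lemma pred_eq_none_iff (Q : VRayPartition n k) (x) :
    predFn Q x = none ↔ idxFn Q x = 0 := by
  unfold predFn; split <;> simp_all

lemma idx_enum (Q : VRayPartition n k) {B} (hB : B ∈ Q.parts.parts) (i : Fin B.card) :
    idxFn Q ((Q.enum B hB i : {y // y ∈ B}) : Fin n × Fin k) = i := by
  have hmem : ((Q.enum B hB i : {y // y ∈ B}) : Fin n × Fin k) ∈ B := (Q.enum B hB i).2
  rw [idx_eq Q hB hmem]
  have h2 : (⟨((Q.enum B hB i : {y // y ∈ B}) : Fin n × Fin k), hmem⟩ : {y // y ∈ B})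
      = Q.enum B hB i := Subtype.ext rfl
  rw [h2, Equiv.symm_apply_apply]

lemma pred_spec (Q : VRayPartition n k) {B} (hB : B ∈ Q.parts.parts) {x y} (hx : x ∈ B)
    (h : predFn Q x = some y) : y ∈ B ∧ idxFn Q y + 1 = idxFn Q x := by
  have hp : Q.parts.part x = B := Q.parts.part_eq_of_mem hB hx
  subst hp
  unfold predFn at h
  split at h
  · exact absurd h (by simp)
  · rename_i h0
    rw [Option.some.injEq] at h
    subst h
    refine ⟨(Q.enum _ _ _).2, ?_⟩
    rw [idx_enum Q (Q.parts.part_mem.mpr (Finset.mem_univ x))]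
    show idxFn Q x - 1 + 1 = idxFn Q x
    omega

lemma eq_of_idx_eq (Q : VRayPartition n k) {B} (hB : B ∈ Q.parts.parts) {x y}
    (hx : x ∈ B) (hy : y ∈ B) (h : idxFn Q x = idxFn Q y) : x = y := by
  rw [idx_eq Q hB hx, idx_eq Q hB hy] at h
  have h2 := (Q.enum B hB).symm.injective (Fin.val_injective h)
  exact congrArg Subtype.val h2

/-- Iterate a partial map `m` times. -/
def chase (p : (Fin n × Fin k) → Option (Fin n × Fin k)) :
    ℕ → (Fin n × Fin k) → (Fin n × Fin k)
  | 0, x => x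
  | (m+1), x =>
    match p x with
    | none => x
    | some y => chase p m y

lemma chase_spec (Q : VRayPartition n k) :
    ∀ (m : ℕ) (x), idxFn Q x = m →
      chase (predFn Q) m x ∈ Q.parts.part x ∧ idxFn Q (chase (predFn Q) m x) = 0 := by
  intro m
  induction m with
  | zero => exact fun x h => ⟨Q.parts.mem_part (Finset.mem_univ x), h⟩
  | succ m ih =>
    intro x h
    have hne : predFn Q x ≠ none := by
      intro hc; rw [pred_eq_none_iff] at hc; omega
    obtain ⟨y, hy⟩ := Option.ne_none_iff_exists'.mp hne
    have hxX : x ∈ Q.parts.part x := Q.parts.mem_part (Finset.mem_univ x)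
    have hspec := pred_spec Q (Q.parts.part_mem.mpr (Finset.mem_univ x)) hxX hy
    have hidxy : idxFn Q y = m := by omega
    have hchase : chase (predFn Q) (m+1) x = chase (predFn Q) m y := by
      simp [chase, hy]
    rw [hchase]
    obtain ⟨h1, h2⟩ := ih y hidxy
    have hparteq : Q.parts.part y = Q.parts.part x :=
      Q.parts.part_eq_of_mem (Q.parts.part_mem.mpr (Finset.mem_univ x)) hspec.1
    exact ⟨hparteq ▸ h1, h2⟩

/-- The first element of the part of `x`. -/
def rootFn (Q : VRayPartition n k) (x : Fin n × Fin k) : Fin n × Fin k :=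
  chase (predFn Q) (idxFn Q x) x

lemma root_mem (Q : VRayPartition n k) (x) : rootFn Q x ∈ Q.parts.part x :=
  (chase_spec Q _ x rfl).1

lemma root_idx (Q : VRayPartition n k) (x) : idxFn Q (rootFn Q x) = 0 :=
  (chase_spec Q _ x rfl).2

lemma mem_part_iff_root (Q : VRayPartition n k) (x y) :
    y ∈ Q.parts.part x ↔ rootFn Q y = rootFn Q x := by
  constructor
  · intro hy
    have hpy : Q.parts.part y = Q.parts.part x :=
      Q.parts.part_eq_of_mem (Q.parts.part_mem.mpr (Finset.mem_univ x)) hy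
    refine eq_of_idx_eq Q (Q.parts.part_mem.mpr (Finset.mem_univ x))
      (hpy ▸ root_mem Q y) (root_mem Q x) ?_
    rw [root_idx, root_idx]
  · intro h
    have h1 : rootFn Q y ∈ Q.parts.part y := root_mem Q y
    have h2 : rootFn Q y ∈ Q.parts.part x := h ▸ root_mem Q x
    have h3 : Q.parts.part y = Q.parts.part x :=
      Q.parts.eq_of_mem_parts (Q.parts.part_mem.mpr (Finset.mem_univ y))
        (Q.parts.part_mem.mpr (Finset.mem_univ x)) h1 h2
    exact h3 ▸ Q.parts.mem_part (Finset.mem_univ y)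

lemma idx_congr {Q1 Q2 : VRayPartition n k} (h : predFn Q1 = predFn Q2) (x) :
    idxFn Q1 x = idxFn Q2 x := by
  suffices H : ∀ m x, idxFn Q1 x = m → idxFn Q1 x = idxFn Q2 x from H _ x rfl
  intro m
  induction m using Nat.strong_induction_on with
  | _ m ih =>
    intro x hx
    cases hpx : predFn Q1 x with
    | none =>
      have h1 : idxFn Q1 x = 0 := (pred_eq_none_iff Q1 x).mp hpx
      have h2 : idxFn Q2 x = 0 := (pred_eq_none_iff Q2 x).mp (h ▸ hpx)
      omega
    | some y =>
      have s1 := pred_spec Q1 (Q1.parts.part_mem.mpr (Finset.mem_univ x))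
        (Q1.parts.mem_part (Finset.mem_univ x)) hpx
      have s2 := pred_spec Q2 (Q2.parts.part_mem.mpr (Finset.mem_univ x))
        (Q2.parts.mem_part (Finset.mem_univ x)) (by rw [← h]; exact hpx)
      have := ih (idxFn Q1 y) (by omega) y rfl
      omega

lemma ext' {Q1 Q2 : VRayPartition n k} (hp : Q1.parts = Q2.parts)
    (he : ∀ B (hB1 : B ∈ Q1.parts.parts) (hB2 : B ∈ Q2.parts.parts),
      Q1.enum B hB1 = Q2.enum B hB2) : Q1 = Q2 := by
  obtain ⟨p1, e1, m1⟩ := Q1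
  obtain ⟨p2, e2, m2⟩ := Q2
  dsimp at hp he
  subst hp
  have : e1 = e2 := funext fun B => funext fun hB => he B hB hB
  subst this
  rfl

lemma pred_injective {Q1 Q2 : VRayPartition n k} (h : predFn Q1 = predFn Q2) :
    Q1 = Q2 := by
  have hidx : ∀ x, idxFn Q1 x = idxFn Q2 x := idx_congr h
  have hroot : ∀ x, rootFn Q1 x = rootFn Q2 x := fun x => by
    unfold rootFn; rw [hidx, h]
  have hpart : ∀ x, Q1.parts.part x = Q2.parts.part x := fun x => by
    ext y
    rw [mem_part_iff_root, mem_part_iff_root, hroot, hroot]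
  have hps : Q1.parts.parts = Q2.parts.parts := by
    ext B
    constructor <;> intro hB
    · obtain ⟨x, hx⟩ := Q1.parts.nonempty_of_mem_parts hB
      have hBe : B = Q1.parts.part x := (Q1.parts.part_eq_of_mem hB hx).symm
      rw [hBe, hpart x]
      exact Q2.parts.part_mem.mpr (Finset.mem_univ x)
    · obtain ⟨x, hx⟩ := Q2.parts.nonempty_of_mem_parts hB
      have hBe : B = Q2.parts.part x := (Q2.parts.part_eq_of_mem hB hx).symm
      rw [hBe, ← hpart x]
      exact Q1.parts.part_mem.mpr (Finset.mem_univ x)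
  have hparts : Q1.parts = Q2.parts := Finpartition.ext hps
  refine ext' hparts ?_
  intro B hB1 hB2
  apply Equiv.ext
  intro i
  set x := ((Q1.enum B hB1 i : {y // y ∈ B}) : Fin n × Fin k) with hxdef
  have hx : x ∈ B := (Q1.enum B hB1 i).2
  have h1 : idxFn Q1 x = i := idx_enum Q1 hB1 i
  have h2 : ((Q2.enum B hB2).symm ⟨x, hx⟩ : ℕ) = i := by
    rw [← idx_eq Q2 hB2 hx, ← hidx]; exact h1
  have h3 : (Q2.enum B hB2).symm ⟨x, hx⟩ = i := Fin.val_injective h2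
  have h4 : Q2.enum B hB2 i = ⟨x, hx⟩ := by
    rw [← h3, Equiv.apply_symm_apply]
  rw [h4]

lemma card_pred_none (Q : VRayPartition n k) :
    (Finset.univ.filter fun x => predFn Q x = none).card = Q.parts.parts.card := by
  refine (Finset.card_bij
    (fun B hB => ((Q.enum B hB ⟨0, Finset.card_pos.mpr (Q.parts.nonempty_of_mem_parts hB)⟩ :
      {y // y ∈ B}) : Fin n × Fin k)) ?_ ?_ ?_).symm
  · intro B hB
    rw [Finset.mem_filter]
    refine ⟨Finset.mem_univ _, ?_⟩
    rw [pred_eq_none_iff, idx_enum]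
  · intro B hB B' hB' hval
    have h1 : ((Q.enum B hB ⟨0, Finset.card_pos.mpr (Q.parts.nonempty_of_mem_parts hB)⟩ :
        {y // y ∈ B}) : Fin n × Fin k) ∈ B := (Q.enum B hB _).2
    have h2 : ((Q.enum B' hB' ⟨0, Finset.card_pos.mpr (Q.parts.nonempty_of_mem_parts hB')⟩ :
        {y // y ∈ B'}) : Fin n × Fin k) ∈ B' := (Q.enum B' hB' _).2
    rw [hval] at h1
    exact Q.parts.eq_of_mem_parts hB hB' h1 h2
  · intro x hx
    rw [Finset.mem_filter] at hx
    have h0 : idxFn Q x = 0 := (pred_eq_none_iff Q x).mp hx.2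
    have hBmem := Q.parts.part_mem.mpr (Finset.mem_univ x)
    refine ⟨Q.parts.part x, hBmem, ?_⟩
    have hxm : x ∈ Q.parts.part x := Q.parts.mem_part (Finset.mem_univ x)
    have hpos : 0 < (Q.parts.part x).card := Finset.card_pos.mpr ⟨x, hxm⟩
    have h1 : ((Q.enum _ hBmem).symm ⟨x, hxm⟩ : ℕ) = 0 := by
      rw [← idx_eq Q hBmem hxm]; exact h0
    have h2 : (Q.enum _ hBmem).symm ⟨x, hxm⟩ = ⟨0, hpos⟩ := Fin.val_injective h1
    have h3 : Q.enum _ hBmem ⟨0, hpos⟩ = ⟨x, hxm⟩ := by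
      rw [← h2, Equiv.apply_symm_apply]
    exact congrArg Subtype.val h3

lemma card_support (Q : VRayPartition n k) (t : ℕ) (ht : t < n * k)
    (hlen : Q.length = n * k - t) :
    (Finset.univ.filter fun x => predFn Q x ≠ none).card = t := by
  have h1 := card_pred_none Q
  have h2 := Finset.card_filter_add_card_filter_not
    (s := (Finset.univ : Finset (Fin n × Fin k))) (p := fun x => predFn Q x = none)
  have h3 : (Finset.univ : Finset (Fin n × Fin k)).card = n * k := by
    simp [Finset.card_univ]
  unfold length at hlen
  simp only [ne_eq]
  omega

lemma card_pairs (Q : VRayPartition n k) :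
    (Finset.univ.filter fun p : (Fin n × Fin k) × (Fin n × Fin k) =>
      predFn Q p.1 = some p.2).card
      = (Finset.univ.filter fun x => predFn Q x ≠ none).card := by
  refine Finset.card_bij (fun p _ => p.1) ?_ ?_ ?_
  · intro p hp
    rw [Finset.mem_filter] at hp ⊢
    exact ⟨Finset.mem_univ _, by rw [hp.2]; simp⟩
  · intro p hp q hq hval
    rw [Finset.mem_filter] at hp hq
    have h5 : (some p.2 : Option (Fin n × Fin k)) = some q.2 := by
      rw [← hp.2, hval, hq.2]
    exact Prod.ext hval (Option.some.inj h5)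
  · intro x hx
    rw [Finset.mem_filter] at hx
    obtain ⟨y, hy⟩ := Option.ne_none_iff_exists'.mp hx.2
    exact ⟨(x, y), Finset.mem_filter.mpr ⟨Finset.mem_univ _, hy⟩, rfl⟩

end VRayPartition

/-- For fixed `k ≥ 1` and `t ≥ 0`, there is a rational polynomial `P` of degree at most
`2t` such that for all `n` with `nk > t`, the number of ray partitions of type
`(k, …, k)` (`n` copies) of length `nk − t` is at most `P(n)`. -/
theorem vRayPartition_count_polynomial_bound (k t : ℕ) (hk : 1 ≤ k) :
    ∃ P : Polynomial ℚ, P.natDegree ≤ 2 * t ∧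
      ∀ n : ℕ, t < n * k →
        (Nat.card {Q : VRayPartition n k // Q.length = n * k - t} : ℚ) ≤
          P.eval (n : ℚ) := by
  classical
  refine ⟨Polynomial.C ((k : ℚ) ^ (2 * t)) * Polynomial.X ^ (2 * t),
    Polynomial.natDegree_C_mul_X_pow_le _ _, ?_⟩
  intro n hn
  set Φ : {Q : VRayPartition n k // Q.length = n * k - t} →
      {S : Finset ((Fin n × Fin k) × (Fin n × Fin k)) // S.card = t} :=
    fun Q => ⟨Finset.univ.filter fun p => VRayPartition.predFn Q.1 p.1 = some p.2, by
      rw [VRayPartition.card_pairs, VRayPartition.card_support Q.1 t hn Q.2]⟩ with hΦ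
  have hinj : Function.Injective Φ := by
    intro Q1 Q2 hQ
    have hS := congrArg Subtype.val hQ
    simp only [hΦ] at hS
    apply Subtype.ext
    apply VRayPartition.pred_injective
    funext x
    have key : ∀ y, VRayPartition.predFn Q1.1 x = some y ↔
        VRayPartition.predFn Q2.1 x = some y := by
      intro y
      constructor <;> intro hy
      · have hm : (x, y) ∈ Finset.univ.filter
            (fun p : (Fin n × Fin k) × (Fin n × Fin k) =>
              VRayPartition.predFn Q1.1 p.1 = some p.2) :=
          Finset.mem_filter.mpr ⟨Finset.mem_univ _, hy⟩
        rw [hS] at hm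
        exact (Finset.mem_filter.mp hm).2
      · have hm : (x, y) ∈ Finset.univ.filter
            (fun p : (Fin n × Fin k) × (Fin n × Fin k) =>
              VRayPartition.predFn Q2.1 p.1 = some p.2) :=
          Finset.mem_filter.mpr ⟨Finset.mem_univ _, hy⟩
        rw [← hS] at hm
        exact (Finset.mem_filter.mp hm).2
    cases h1 : VRayPartition.predFn Q1.1 x with
    | none =>
      cases h2 : VRayPartition.predFn Q2.1 x with
      | none => rfl
      | some y => exact absurd ((key y).mpr h2) (by rw [h1]; simp)
    | some y => rw [(key y).mp h1]
  have hcard := Nat.card_le_card_of_injective Φ hinj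
  have hcodcard :
      Nat.card {S : Finset ((Fin n × Fin k) × (Fin n × Fin k)) // S.card = t}
        = (n * k * (n * k)).choose t := by
    rw [Nat.card_eq_fintype_card, Fintype.card_subtype]
    have he : (Finset.univ.filter
        fun S : Finset ((Fin n × Fin k) × (Fin n × Fin k)) => S.card = t)
        = Finset.powersetCard t Finset.univ := by
      rw [Finset.powersetCard_eq_filter, Finset.powerset_univ]
    rw [he, Finset.card_powersetCard, Finset.card_univ]
    simp
  have hb : Nat.card {Q : VRayPartition n k // Q.length = n * k - t}
      ≤ (n * k * (n * k)) ^ t := by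
    rw [hcodcard] at hcard
    exact hcard.trans (Nat.choose_le_pow _ _)
  have heval : (Polynomial.C ((k : ℚ) ^ (2 * t)) * Polynomial.X ^ (2 * t)).eval (n : ℚ)
      = (((n * k * (n * k)) ^ t : ℕ) : ℚ) := by
    simp only [Polynomial.eval_mul, Polynomial.eval_C, Polynomial.eval_pow,
      Polynomial.eval_X]
    push_cast
    ring
  rw [heval]
  exact_mod_cast hb
end

section
/- Fix integers p ≥ 0, q ≥ 2, k ≥ 1 and d ≥ 0. There exists a polynomial P ∈ ℚ[X] of degree at most ⌊2d/(q−1)⌋ such that for every n ≥ 1, the number of ray partitions Q of type K = (k, …, k) (n copies of k) satisfying p·(n − a(Q)) + (q−1)·(nk − ℓ(Q)) = d is at most P(n). (By the theorem of Bianchi–Kranhold, this count equals the rank of the degree-d integral cohomology group of the ordered vertical configuration space of n vertical clusters of k points in ℝ^{p+q}; hence this rank grows at most polynomially in n of degree ⌊2d/(q−1)⌋.) -/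
open Finset

namespace VRayPartition

variable {n k : ℕ}

/-- The part containing `x`. -/
noncomputable def part (Q : VRayPartition n k) (x : Fin n × Fin k) :
    Finset (Fin n × Fin k) := Q.parts.part x

lemma part_mem (Q : VRayPartition n k) (x : Fin n × Fin k) :
    Q.part x ∈ Q.parts.parts := Q.parts.part_mem.2 (mem_univ x)

lemma mem_part (Q : VRayPartition n k) (x : Fin n × Fin k) :
    x ∈ Q.part x := Q.parts.mem_part (mem_univ x)

lemma card_part_pos (Q : VRayPartition n k) (x : Fin n × Fin k) :
    0 < (Q.part x).card := card_pos.2 ⟨x, Q.mem_part x⟩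

/-- The index of `x` in the enumeration of its part. -/
noncomputable def idx (Q : VRayPartition n k) (x : Fin n × Fin k) : ℕ :=
  ((Q.enum (Q.part x) (Q.part_mem x)).symm ⟨x, Q.mem_part x⟩ : Fin (Q.part x).card)

/-- The first element of the enumeration of the part of `x`. -/
noncomputable def e0 (Q : VRayPartition n k) (x : Fin n × Fin k) : Fin n × Fin k :=
  ((Q.enum (Q.part x) (Q.part_mem x) ⟨0, Q.card_part_pos x⟩ :
    {y // y ∈ Q.part x}) : Fin n × Fin k)

lemma part_eq (Q : VRayPartition n k) {B : Finset (Fin n × Fin k)}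
    (hB : B ∈ Q.parts.parts) {x : Fin n × Fin k} (hx : x ∈ B) : Q.part x = B :=
  Q.parts.part_eq_of_mem hB hx

lemma idx_e0_eq (Q : VRayPartition n k) {B : Finset (Fin n × Fin k)}
    (hB : B ∈ Q.parts.parts) {x : Fin n × Fin k} (hx : x ∈ B) (h0 : 0 < B.card) :
    Q.idx x = ((Q.enum B hB).symm ⟨x, hx⟩ : Fin B.card).val ∧
      Q.e0 x = ((Q.enum B hB ⟨0, h0⟩ : {y // y ∈ B}) : Fin n × Fin k) := by
  have h := Q.part_eq hB hx
  subst h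
  exact ⟨rfl, rfl⟩

lemma e0_mem_part (Q : VRayPartition n k) (x : Fin n × Fin k) :
    Q.e0 x ∈ Q.part x :=
  (Q.enum (Q.part x) (Q.part_mem x) ⟨0, Q.card_part_pos x⟩).2

lemma idx_eq_zero_iff (Q : VRayPartition n k) (x : Fin n × Fin k) :
    Q.idx x = 0 ↔ x = Q.e0 x := by
  unfold idx e0
  constructor
  · intro h
    have h1 : (Q.enum (Q.part x) (Q.part_mem x)).symm ⟨x, Q.mem_part x⟩ =
        ⟨0, Q.card_part_pos x⟩ := Fin.ext h
    have h2 := congrArg (Q.enum (Q.part x) (Q.part_mem x)) h1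
    rw [Equiv.apply_symm_apply] at h2
    exact congrArg Subtype.val h2
  · intro h
    have h1 : (⟨x, Q.mem_part x⟩ : {y // y ∈ Q.part x}) =
        Q.enum (Q.part x) (Q.part_mem x) ⟨0, Q.card_part_pos x⟩ := Subtype.ext h
    rw [h1, Equiv.symm_apply_apply]

lemma idx_lt (Q : VRayPartition n k) (x : Fin n × Fin k) :
    Q.idx x < (Q.part x).card :=
  ((Q.enum (Q.part x) (Q.part_mem x)).symm ⟨x, Q.mem_part x⟩).isLt

lemma mem_part_iff_e0 (Q : VRayPartition n k) (x y : Fin n × Fin k) :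
    y ∈ Q.part x ↔ Q.e0 y = Q.e0 x := by
  constructor
  · intro hy
    rw [(Q.idx_e0_eq (Q.part_mem x) hy (Q.card_part_pos x)).2,
      (Q.idx_e0_eq (Q.part_mem x) (Q.mem_part x) (Q.card_part_pos x)).2]
  · intro h
    have h1 : Q.part y = Q.part x :=
      Q.parts.eq_of_mem_parts (Q.part_mem y) (Q.part_mem x)
        (h ▸ Q.e0_mem_part y) (Q.e0_mem_part x)
    exact h1 ▸ Q.mem_part y

end VRayPartition
open Finset

namespace VRayPartition

variable {n k : ℕ}

open Classical in
/-- The set of elements that are not first in their part. -/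
noncomputable def nonmin (Q : VRayPartition n k) : Finset (Fin n × Fin k) :=
  univ.filter fun x => Q.idx x ≠ 0

open Classical in
lemma card_nonmin_le (Q : VRayPartition n k) :
    Q.nonmin.card ≤ n * k - Q.length := by
  classical
  have huniv : (univ : Finset (Fin n × Fin k)).card = n * k := by
    simp [card_univ]
  -- the first elements of parts are distinct elements with idx = 0
  have h1 : Q.length ≤ (univ.filter fun x => Q.idx x = 0).card := by
    have h0 : ∀ B : {s // s ∈ Q.parts.parts}, 0 < B.1.card :=
      fun B => card_pos.2 (Q.parts.nonempty_of_mem_parts B.2)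
    set F : {s // s ∈ Q.parts.parts} → Fin n × Fin k := fun B =>
      ((Q.enum B.1 B.2 ⟨0, h0 B⟩ : {y // y ∈ B.1}) : Fin n × Fin k) with hF
    have hFmem : ∀ B : {s // s ∈ Q.parts.parts}, F B ∈ B.1 :=
      fun B => (Q.enum B.1 B.2 ⟨0, h0 B⟩).2
    have hcard := Finset.card_le_card_of_injOn F
      (s := (univ : Finset {s // s ∈ Q.parts.parts}))
      (t := univ.filter fun x => Q.idx x = 0) ?_ ?_
    · simpa [length, Fintype.card_coe] using hcard
    · intro B _
      rw [Finset.mem_coe, mem_filter]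
      refine ⟨mem_univ _, ?_⟩
      rw [(Q.idx_e0_eq B.2 (hFmem B) (h0 B)).1]
      have : (⟨F B, hFmem B⟩ : {y // y ∈ B.1}) = Q.enum B.1 B.2 ⟨0, h0 B⟩ :=
        Subtype.ext rfl
      rw [this, Equiv.symm_apply_apply]
    · intro B _ B' _ hBB'
      exact Subtype.ext (Q.parts.eq_of_mem_parts B.2 B'.2
        (hBB' ▸ hFmem B) (hFmem B'))
  have h2 : (univ.filter fun x => Q.idx x = 0).card + Q.nonmin.card = n * k := by
    rw [nonmin, Finset.card_filter_add_card_filter_not, huniv]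
  omega

lemma card_part_le (Q : VRayPartition n k) (x : Fin n × Fin k) :
    (Q.part x).card ≤ n * k - Q.length + 1 := by
  classical
  have hsum : ∑ B ∈ Q.parts.parts, B.card = n * k := by
    rw [Q.parts.sum_card_parts]; simp [card_univ]
  have hx := Q.part_mem x
  have herase : (Q.part x).card + ∑ B ∈ Q.parts.parts.erase (Q.part x), B.card
      = n * k := by
    rw [Finset.add_sum_erase _ _ hx, hsum]
  have hge : (Q.parts.parts.erase (Q.part x)).card ≤
      ∑ B ∈ Q.parts.parts.erase (Q.part x), B.card := by
    have h := Finset.card_nsmul_le_sum (Q.parts.parts.erase (Q.part x))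
      (fun B => B.card) 1
      (fun B hB => card_pos.2 (Q.parts.nonempty_of_mem_parts (Finset.mem_of_mem_erase hB)))
    simpa using h
  have hcerase : (Q.parts.parts.erase (Q.part x)).card = Q.length - 1 := by
    rw [Finset.card_erase_of_mem hx]; rfl
  have hlen : 1 ≤ Q.length := Finset.card_pos.2 ⟨_, hx⟩
  omega

lemma idx_le (Q : VRayPartition n k) (x : Fin n × Fin k) :
    Q.idx x ≤ n * k - Q.length := by
  have := Q.idx_lt x
  have := Q.card_part_le x
  omega

end VRayPartition
open Finset

namespace VRayPartition

variable {n k : ℕ}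

open Classical in
/-- Encode a ray partition as a finite set of triples. -/
noncomputable def encode (Q : VRayPartition n k) (m : ℕ) :
    Finset ((Fin n × Fin k) × (Fin n × Fin k) × Fin (m + 1)) :=
  Q.nonmin.image fun x =>
    (x, Q.e0 x, ⟨min (Q.idx x) m, Nat.lt_succ_of_le (Nat.min_le_right _ _)⟩)

open Classical in
lemma card_encode_le (Q : VRayPartition n k) (m : ℕ) :
    (Q.encode m).card ≤ Q.nonmin.card := Finset.card_image_le

open Classical in
lemma encode_spec {Q1 Q2 : VRayPartition n k} {m : ℕ}
    (h1 : ∀ x, Q1.idx x ≤ m) (h2 : ∀ x, Q2.idx x ≤ m)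
    (h : Q1.encode m = Q2.encode m) (x : Fin n × Fin k) (hx : Q1.idx x ≠ 0) :
    Q2.e0 x = Q1.e0 x ∧ Q2.idx x = Q1.idx x := by
  have hxm : (x, Q1.e0 x,
      (⟨min (Q1.idx x) m, Nat.lt_succ_of_le (Nat.min_le_right _ _)⟩ : Fin (m+1)))
      ∈ Q2.encode m := by
    rw [← h, encode]
    exact Finset.mem_image_of_mem _ (by simp [nonmin, hx])
  rw [encode, Finset.mem_image] at hxm
  obtain ⟨y, hy, hyx⟩ := hxm
  have hy1 : y = x := congrArg Prod.fst hyx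
  subst hy1
  have he : Q2.e0 y = Q1.e0 y := congrArg (fun z => z.2.1) hyx
  have hi : min (Q2.idx y) m = min (Q1.idx y) m := by
    have := congrArg (fun z => (z.2.2 : Fin (m+1)).val) hyx
    simpa using this
  rw [Nat.min_eq_left (h2 y), Nat.min_eq_left (h1 y)] at hi
  exact ⟨he, hi⟩

open Classical in
lemma eq_of_encode_eq {Q1 Q2 : VRayPartition n k} {m : ℕ}
    (h1 : ∀ x, Q1.idx x ≤ m) (h2 : ∀ x, Q2.idx x ≤ m)
    (h : Q1.encode m = Q2.encode m) : Q1 = Q2 := by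
  have key : ∀ x, Q1.e0 x = Q2.e0 x ∧ Q1.idx x = Q2.idx x := by
    intro x
    by_cases hx1 : Q1.idx x = 0
    · by_cases hx2 : Q2.idx x = 0
      · refine ⟨?_, by rw [hx1, hx2]⟩
        rw [← (Q1.idx_eq_zero_iff x).1 hx1, ← (Q2.idx_eq_zero_iff x).1 hx2]
      · obtain ⟨_, hi⟩ := encode_spec h2 h1 h.symm x hx2
        exact absurd (hi ▸ hx1) hx2
    · obtain ⟨he, hi⟩ := encode_spec h1 h2 h x hx1
      exact ⟨he.symm, hi.symm⟩
  have hpart : ∀ x, Q1.part x = Q2.part x := by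
    intro x
    ext y
    rw [mem_part_iff_e0, mem_part_iff_e0, (key y).1, (key x).1]
  have hparts : Q1.parts = Q2.parts := by
    apply Finpartition.ext
    ext B
    constructor
    · intro hB
      obtain ⟨x, hx⟩ := Q1.parts.nonempty_of_mem_parts hB
      have hBx : Q1.part x = B := Q1.part_eq hB hx
      rw [← hBx, hpart x]
      exact Q2.part_mem x
    · intro hB
      obtain ⟨x, hx⟩ := Q2.parts.nonempty_of_mem_parts hB
      have hBx : Q2.part x = B := Q2.part_eq hB hx
      rw [← hBx, ← hpart x]
      exact Q1.part_mem x
  -- now show the enumerations coincide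
  obtain ⟨P1, en1, hm1⟩ := Q1
  obtain ⟨P2, en2, hm2⟩ := Q2
  dsimp at hparts
  subst hparts
  have hen : en1 = en2 := by
    funext B hB
    have hsymm : ((en1 B hB).symm : {y // y ∈ B} → Fin B.card)
        = ((en2 B hB).symm : {y // y ∈ B} → Fin B.card) := by
      funext z
      apply Fin.ext
      have e1 := ((VRayPartition.mk P1 en1 hm1).idx_e0_eq hB z.2
        (Finset.card_pos.2 ⟨z.1, z.2⟩)).1
      have e2 := ((VRayPartition.mk P1 en2 hm2).idx_e0_eq hB z.2
        (Finset.card_pos.2 ⟨z.1, z.2⟩)).1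
      rw [show (⟨z.1, z.2⟩ : {y // y ∈ B}) = z from rfl] at e1 e2
      rw [← e1, ← e2, (key z.1).2]
    have := congrArg Equiv.symm (Equiv.coe_fn_injective ?_ :
      (en1 B hB).symm = (en2 B hB).symm)
    · simpa using this
    · exact hsymm
  subst hen
  rfl

end VRayPartition
lemma vray_list_eq_of_getElem? {γ : Type*} {m : ℕ} {l1 l2 : List γ}
    (h1 : l1.length ≤ m) (h2 : l2.length ≤ m)
    (h : ∀ i : Fin m, l1[(i : ℕ)]? = l2[(i : ℕ)]?) : l1 = l2 := by
  apply List.ext_getElem?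
  intro i
  by_cases hi : i < m
  · exact h ⟨i, hi⟩
  · rw [List.getElem?_eq_none (h1.trans (Nat.le_of_not_lt hi)),
      List.getElem?_eq_none (h2.trans (Nat.le_of_not_lt hi))]

lemma vray_nat_card_le {α β : Type*} [Fintype α] [DecidableEq α] (m : ℕ)
    (f : β → Finset α) (hf : Function.Injective f) (hcard : ∀ b, (f b).card ≤ m) :
    Nat.card β ≤ (Fintype.card α + 1) ^ m := by
  classical
  set N := Fintype.card α with hN
  let e : α ≃ Fin N := Fintype.equivFin α
  let g : β → (Fin m → Option (Fin N)) := fun b i =>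
    (((f b).map e.toEmbedding).sort (· ≤ ·))[(i : ℕ)]?
  have hg : Function.Injective g := by
    intro b1 b2 hb
    have hlen : ∀ b : β, (((f b).map e.toEmbedding).sort (· ≤ ·)).length ≤ m := fun b => by
      rw [Finset.length_sort, Finset.card_map]; exact hcard b
    have hl : ((f b1).map e.toEmbedding).sort (· ≤ ·)
        = ((f b2).map e.toEmbedding).sort (· ≤ ·) :=
      vray_list_eq_of_getElem? (hlen b1) (hlen b2) (fun i => congrFun hb i)
    have hmap : (f b1).map e.toEmbedding = (f b2).map e.toEmbedding := by
      rw [← Finset.sort_toFinset ((f b1).map e.toEmbedding) (· ≤ ·), hl,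
        Finset.sort_toFinset]
    exact hf (Finset.map_injective _ hmap)
  calc Nat.card β ≤ Nat.card (Fin m → Option (Fin N)) :=
        Nat.card_le_card_of_injective g hg
    _ = (N + 1) ^ m := by
        simp [Nat.card_eq_fintype_card, Fintype.card_fun]
/-- For fixed `p ≥ 0`, `q ≥ 2`, `k ≥ 1` and `d ≥ 0`, there is a rational polynomial `P`
of degree at most `⌊2d/(q−1)⌋` such that for every `n ≥ 1`, the number of ray
partitions `Q` of type `(k, …, k)` (`n` copies) with
`p·(n − a(Q)) + (q−1)·(nk − ℓ(Q)) = d` is at most `P(n)`.  (By Bianchi–Kranhold, this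
count is the rank of `H^d` of the ordered vertical configuration space of `n` vertical
clusters of `k` points in `ℝ^{p+q}`.) -/
theorem vRayPartition_degree_count_polynomial_bound (p q k d : ℕ)
    (hq : 2 ≤ q) (hk : 1 ≤ k) :
    ∃ P : Polynomial ℚ, P.natDegree ≤ 2 * d / (q - 1) ∧
      ∀ n : ℕ, 1 ≤ n →
        (Nat.card {Q : VRayPartition n k //
            p * (n - Q.agility) + (q - 1) * (n * k - Q.length) = d} : ℚ) ≤
          P.eval (n : ℚ) := by
  classical
  set m := d / (q - 1) with hm
  set c : ℕ := ((m + 1) * k ^ 2 + 1) ^ m with hc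
  refine ⟨Polynomial.C (c : ℚ) * Polynomial.X ^ (2 * m), ?_, ?_⟩
  · refine le_trans (Polynomial.natDegree_C_mul_le _ _) ?_
    rw [Polynomial.natDegree_X_pow]
    rw [Nat.le_div_iff_mul_le (by omega : 0 < q - 1)]
    calc 2 * m * (q - 1) = 2 * (d / (q - 1) * (q - 1)) := by rw [hm]; ring
      _ ≤ 2 * d := Nat.mul_le_mul_left 2 (Nat.div_mul_le_self d (q - 1))
  · intro n hn
    have hnat : Nat.card {Q : VRayPartition n k //
        p * (n - Q.agility) + (q - 1) * (n * k - Q.length) = d} ≤ c * n ^ (2 * m) := by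
      have hQm : ∀ Q : VRayPartition n k,
          p * (n - Q.agility) + (q - 1) * (n * k - Q.length) = d →
          n * k - Q.length ≤ m := by
        intro Q hQ
        rw [hm, Nat.le_div_iff_mul_le (by omega : 0 < q - 1)]
        calc (n * k - Q.length) * (q - 1) = (q - 1) * (n * k - Q.length) := by ring
          _ ≤ d := by omega
      have hbound : ∀ Q : {Q : VRayPartition n k //
          p * (n - Q.agility) + (q - 1) * (n * k - Q.length) = d},
          ∀ x, Q.1.idx x ≤ m := fun Q x => (Q.1.idx_le x).trans (hQm Q.1 Q.2)
      have hinj : Function.Injective (fun Q : {Q : VRayPartition n k //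
          p * (n - Q.agility) + (q - 1) * (n * k - Q.length) = d} => Q.1.encode m) := by
        intro Q1 Q2 h
        exact Subtype.ext (VRayPartition.eq_of_encode_eq (hbound Q1) (hbound Q2) h)
      have hcard : ∀ Q : {Q : VRayPartition n k //
          p * (n - Q.agility) + (q - 1) * (n * k - Q.length) = d},
          (Q.1.encode m).card ≤ m := fun Q =>
        (Q.1.card_encode_le m).trans ((Q.1.card_nonmin_le).trans (hQm Q.1 Q.2))
      have h1 := vray_nat_card_le m _ hinj hcard
      refine h1.trans ?_
      have hα : Fintype.card ((Fin n × Fin k) × (Fin n × Fin k) × Fin (m + 1))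
          = (n * k) * ((n * k) * (m + 1)) := by simp
      rw [hα]
      have hn2 : 1 ≤ n ^ 2 := Nat.one_le_pow _ _ (by omega)
      have hstep : (n * k) * ((n * k) * (m + 1)) + 1 ≤ ((m + 1) * k ^ 2 + 1) * n ^ 2 := by
        calc (n * k) * ((n * k) * (m + 1)) + 1 = (m + 1) * k ^ 2 * n ^ 2 + 1 := by ring
          _ ≤ (m + 1) * k ^ 2 * n ^ 2 + n ^ 2 := by omega
          _ = ((m + 1) * k ^ 2 + 1) * n ^ 2 := by ring
      calc ((n * k) * ((n * k) * (m + 1)) + 1) ^ m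
          ≤ (((m + 1) * k ^ 2 + 1) * n ^ 2) ^ m := Nat.pow_le_pow_left hstep m
        _ = c * n ^ (2 * m) := by rw [hc, mul_pow, ← pow_mul]
    have hcast := (Nat.cast_le (α := ℚ)).2 hnat
    rw [Polynomial.eval_mul, Polynomial.eval_C, Polynomial.eval_pow, Polynomial.eval_X]
    push_cast at hcast
    exact hcast
end

section
/- Let G be a group and let m ≤ n be natural numbers. Consider the subgroup of the wreath product G ≀ Sₙ (the semidirect product (Fin n → G) ⋊ Equiv.Perm (Fin n)) consisting of all pairs (β, σ) such that σ(ι(i)) = ι(i) and β(ι(i)) = 1 for all i ∈ Fin m, where ι : Fin m → Fin n is the canonical inclusion; this is exactly the stabilizer of the canonical inclusion morphism under postcomposition. This subgroup is isomorphic, as a group, to the wreath product G ≀ S_{n−m}, i.e. to (Fin (n−m) → G) ⋊ Equiv.Perm (Fin (n−m)). -/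
/-- The action `π • α = α ∘ π⁻¹` of `Equiv.Perm (Fin n)` on `Fin n → G`, as a
homomorphism into the automorphism group: `(wreathConj G n π) α = α ∘ π⁻¹`. -/
def wreathConj (G : Type*) [Group G] (n : ℕ) :
    Equiv.Perm (Fin n) →* MulAut (Fin n → G) where
  toFun π :=
    { toEquiv := Equiv.arrowCongr π (Equiv.refl G)
      map_mul' := fun _ _ => rfl }
  map_one' := rfl
  map_mul' := fun _ _ => rfl

/-- The wreath product `G ≀ Sₙ`: the semidirect product
`(Fin n → G) ⋊ Equiv.Perm (Fin n)`, where `π` acts on `α : Fin n → G` by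
`π • α = α ∘ π⁻¹`; thus `(α, π) * (α′, π′) = (α · (α′ ∘ π⁻¹), π * π′)`. -/
abbrev WreathProduct (G : Type*) [Group G] (n : ℕ) :=
  (Fin n → G) ⋊[wreathConj G n] Equiv.Perm (Fin n)

section Aux

variable (G : Type*) [Group G] (m n : ℕ)

/-- The equivalence between `Fin (n - m)` and the final segment of `Fin n`. -/
def stabEquiv : Fin (n - m) ≃ {x : Fin n // m ≤ x.val} where
  toFun j := ⟨⟨m + j.val, by have := j.isLt; omega⟩, by simp⟩
  invFun x := ⟨x.1.val - m, by have := x.1.isLt; omega⟩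
  left_inv j := by ext; simp
  right_inv x := by
    have := x.2
    ext
    simp
    omega

/-- Extension of a tuple on the final segment by `1`. -/
def stabF : (Fin (n - m) → G) →* (Fin n → G) where
  toFun β' x := if hx : m ≤ x.val then β' ⟨x.val - m, by have := x.isLt; omega⟩ else 1
  map_one' := by funext x; by_cases hx : m ≤ x.val <;> simp [hx]
  map_mul' β₁ β₂ := by funext x; by_cases hx : m ≤ x.val <;> simp [hx]

/-- Extension of a permutation of the final segment by the identity. -/
def stabP : Equiv.Perm (Fin (n - m)) →* Equiv.Perm (Fin n) :=
  Equiv.Perm.extendDomainHom (stabEquiv m n)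

lemma stabF_stabP (β' : Fin (n - m) → G) (τ : Equiv.Perm (Fin (n - m))) (x : Fin n) :
    stabF G m n (β' ∘ τ) x = stabF G m n β' (stabP m n τ x) := by
  by_cases hx : m ≤ x.val
  · have hsub : stabP m n τ x =
        ((stabEquiv m n) (τ ((stabEquiv m n).symm ⟨x, hx⟩)) : {y : Fin n // m ≤ y.val}) :=
      Equiv.Perm.extendDomain_apply_subtype τ (stabEquiv m n) hx
    have hx2 : m ≤ (stabP m n τ x).val := by
      rw [hsub]; exact ((stabEquiv m n) (τ ((stabEquiv m n).symm ⟨x, hx⟩))).2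
    simp only [stabF, MonoidHom.coe_mk, OneHom.coe_mk, dif_pos hx, dif_pos hx2]
    have e1 : (⟨(stabP m n τ x).val - m, by have := (stabP m n τ x).isLt; omega⟩ :
        Fin (n - m)) = (stabEquiv m n).symm ⟨stabP m n τ x, hx2⟩ := rfl
    have e2 : (⟨x.val - m, by have := x.isLt; omega⟩ : Fin (n - m)) =
        (stabEquiv m n).symm ⟨x, hx⟩ := rfl
    rw [e1, e2]
    have : (⟨stabP m n τ x, hx2⟩ : {y : Fin n // m ≤ y.val}) =
        (stabEquiv m n) (τ ((stabEquiv m n).symm ⟨x, hx⟩)) := Subtype.ext hsub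
    rw [this, Equiv.symm_apply_apply]
    rfl
  · have hfix : stabP m n τ x = x :=
      Equiv.Perm.extendDomain_apply_not_subtype τ (stabEquiv m n) hx
    rw [hfix, stabF]
    simp only [MonoidHom.coe_mk, OneHom.coe_mk, dif_neg hx]

lemma stab_compat (σ' : Equiv.Perm (Fin (n - m))) :
    (stabF G m n).comp (wreathConj G (n - m) σ').toMonoidHom =
      (wreathConj G n (stabP m n σ')).toMonoidHom.comp (stabF G m n) := by
  ext β' x
  have : wreathConj G (n - m) σ' β' = β' ∘ ⇑(σ'⁻¹) := rfl
  simp only [MonoidHom.comp_apply, MulEquiv.coe_toMonoidHom, this]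
  rw [stabF_stabP G m n β' (σ'⁻¹) x]
  have : stabP m n σ'⁻¹ x = (stabP m n σ')⁻¹ x := by rw [map_inv]
  rw [this]
  rfl

/-- The embedding `G ≀ S_{n-m} →* G ≀ Sₙ` fixing the first `m` coordinates. -/
def stabHom : WreathProduct G (n - m) →* WreathProduct G n :=
  SemidirectProduct.map (stabF G m n) (stabP m n) (stab_compat G m n)

lemma stabHom_injective : Function.Injective (stabHom G m n) := by
  intro a b hab
  have hl : stabF G m n a.left = stabF G m n b.left := congrArg SemidirectProduct.left hab
  have hr : stabP m n a.right = stabP m n b.right := congrArg SemidirectProduct.right hab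
  have hl' : a.left = b.left := by
    funext j
    have := congrFun hl ⟨m + j.val, by have := j.isLt; omega⟩
    have hj : m ≤ m + j.val := Nat.le_add_right m j.val
    simpa [stabF, dif_pos hj, show (⟨m + j.val - m, by have := j.isLt; omega⟩ :
      Fin (n - m)) = j from Fin.ext (by simp)] using this
  have hr' : a.right = b.right := Equiv.Perm.extendDomainHom_injective (stabEquiv m n) hr
  exact SemidirectProduct.ext hl' hr'

end Aux

/-- For `m ≤ n`, the subgroup of `G ≀ Sₙ` consisting of all pairs `(β, σ)` with
`σ (ι i) = ι i` and `β (ι i) = 1` for all `i ∈ Fin m` (where `ι = Fin.castLE` is the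
canonical inclusion) — i.e. the stabilizer of the canonical inclusion morphism under
postcomposition — is isomorphic, as a group, to the wreath product `G ≀ S_{n−m}`. -/
theorem wreath_stabilizer_iso (G : Type*) [Group G] (m n : ℕ) (h : m ≤ n) :
    ∃ H : Subgroup (WreathProduct G n),
      (∀ w : WreathProduct G n,
        w ∈ H ↔ ∀ i : Fin m,
          w.right (Fin.castLE h i) = Fin.castLE h i ∧ w.left (Fin.castLE h i) = 1) ∧
      Nonempty (H ≃* WreathProduct G (n - m)) := by
  refine ⟨(stabHom G m n).range, fun w => ⟨?_, ?_⟩, ⟨(MonoidHom.ofInjective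
    (stabHom_injective G m n)).symm⟩⟩
  · rintro ⟨v, rfl⟩ i
    have hi : ¬ m ≤ (Fin.castLE h i).val := by
      have := i.isLt
      simp only [Fin.coe_castLE]
      omega
    constructor
    · exact Equiv.Perm.extendDomain_apply_not_subtype v.right (stabEquiv m n) hi
    · show stabF G m n v.left (Fin.castLE h i) = 1
      simp [stabF, dif_neg hi]
  · intro hw
    have key : ∀ x : Fin n, x.val < m → w.right x = x := by
      intro x hx
      have := (hw ⟨x.val, hx⟩).1
      simpa [show Fin.castLE h ⟨x.val, hx⟩ = x from Fin.ext rfl] using this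
    have key2 : ∀ x : Fin n, x.val < m → w.left x = 1 := by
      intro x hx
      have := (hw ⟨x.val, hx⟩).2
      simpa [show Fin.castLE h ⟨x.val, hx⟩ = x from Fin.ext rfl] using this
    have hσp : ∀ x : Fin n, m ≤ x.val ↔ m ≤ (w.right x).val := by
      intro x
      constructor
      · intro hx
        by_contra hc
        push_neg at hc
        have h1 : w.right (w.right x) = w.right x := key (w.right x) hc
        have h2 : w.right x = x := w.right.injective h1
        rw [h2] at hc; omega
      · intro hx
        by_contra hc
        push_neg at hc
        rw [key x hc] at hx; omega
    refine ⟨⟨fun j => w.left ((stabEquiv m n j : {x : Fin n // m ≤ x.val}) : Fin n),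
      (Equiv.permCongr (stabEquiv m n)).symm (w.right.subtypePerm (fun x => (hσp x).symm))⟩, ?_⟩
    have hleft : stabF G m n
        (fun j => w.left ((stabEquiv m n j : {x : Fin n // m ≤ x.val}) : Fin n)) = w.left := by
      funext x
      by_cases hx : m ≤ x.val
      · have : ((stabEquiv m n ⟨x.val - m, by have := x.isLt; omega⟩ :
            {y : Fin n // m ≤ y.val}) : Fin n) = x := by
          simp [stabEquiv]
          exact Fin.ext (by simp; omega)
        simp only [stabF, MonoidHom.coe_mk, OneHom.coe_mk, dif_pos hx]
        rw [this]
      · simp only [stabF, MonoidHom.coe_mk, OneHom.coe_mk, dif_neg hx]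
        exact (key2 x (by omega)).symm
    have hright : stabP m n ((Equiv.permCongr (stabEquiv m n)).symm
        (w.right.subtypePerm (fun x => (hσp x).symm))) = w.right := by
      ext x
      by_cases hx : m ≤ x.val
      · have := Equiv.Perm.extendDomain_apply_subtype
          ((Equiv.permCongr (stabEquiv m n)).symm (w.right.subtypePerm (fun x => (hσp x).symm)))
          (stabEquiv m n) hx
        rw [stabP, Equiv.Perm.extendDomainHom, MonoidHom.coe_mk, OneHom.coe_mk] at *
        rw [this]
        simp [Equiv.permCongr_apply, Equiv.Perm.subtypePerm_apply]
      · have := Equiv.Perm.extendDomain_apply_not_subtype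
          ((Equiv.permCongr (stabEquiv m n)).symm (w.right.subtypePerm (fun x => (hσp x).symm)))
          (stabEquiv m n) hx
        rw [stabP, Equiv.Perm.extendDomainHom, MonoidHom.coe_mk, OneHom.coe_mk] at *
        rw [this, key x (by omega)]
    exact SemidirectProduct.ext hleft hright
end

section
/- Let G be a finite group with exactly s conjugacy classes, and let n be a natural number. Then the number of conjugacy classes of the wreath product G ≀ Sₙ equals the sum, over all s-tuples (n_1, …, n_s) of natural numbers with n_1 + ⋯ + n_s = n, of the products p(n_1) · p(n_2) ⋯ p(n_s), where p(m) denotes the number of partitions of the natural number m. -/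
namespace WreathAux

open Equiv Function

variable (G : Type*) [Group G]

def wc (ι : Type*) : Equiv.Perm ι →* MulAut (ι → G) where
  toFun π :=
    { toEquiv := Equiv.arrowCongr π (Equiv.refl G)
      map_mul' := fun _ _ => rfl }
  map_one' := rfl
  map_mul' := fun _ _ => rfl

abbrev W (ι : Type*) := (ι → G) ⋊[wc G ι] Equiv.Perm ι

variable {G} {ι : Type*}

lemma wc_eq (n : ℕ) : wc G (Fin n) = wreathConj G n := rfl

@[simp] lemma wc_apply (π : Equiv.Perm ι) (α : ι → G) (x : ι) :
    (wc G ι π α) x = α (π⁻¹ x) := rfl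

lemma mul_left' (a b : W G ι) (x : ι) :
    (a * b).left x = a.left x * b.left (a.right⁻¹ x) := rfl

lemma right_pow (w : W G ι) (k : ℕ) : (w ^ k).right = w.right ^ k := by
  induction k with
  | zero => rfl
  | succ k ih => rw [pow_succ, pow_succ, SemidirectProduct.mul_right, ih]

lemma pow_left_succ (w : W G ι) (k : ℕ) (x : ι) :
    (w ^ (k + 1)).left x = (w ^ k).left x * w.left ((w.right ^ k)⁻¹ x) := by
  rw [pow_succ, mul_left', right_pow]


-- helper: minimal period transported along an equivalence intertwining maps
lemma minimalPeriod_semiconj {α β : Type*} (e : α ≃ β) {f : α → α} {g : β → β}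
    (h : ∀ x, g (e x) = e (f x)) (x : α) :
    minimalPeriod g (e x) = minimalPeriod f x := by
  have hiter : ∀ (m : ℕ) (y : α), g^[m] (e y) = e (f^[m] y) := by
    intro m
    induction m with
    | zero => intro y; simp
    | succ m ih => intro y; rw [Function.iterate_succ_apply, Function.iterate_succ_apply, h, ih]
  have hper : ∀ m (y : α), IsPeriodicPt g m (e y) ↔ IsPeriodicPt f m y := by
    intro m y
    unfold IsPeriodicPt IsFixedPt
    rw [hiter]
    exact ⟨fun hh => e.injective hh, fun hh => by rw [hh]⟩
  apply Nat.dvd_antisymm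
  · exact IsPeriodicPt.minimalPeriod_dvd ((hper _ x).2 (isPeriodicPt_minimalPeriod f x))
  · exact IsPeriodicPt.minimalPeriod_dvd ((hper _ x).1 (isPeriodicPt_minimalPeriod g (e x)))

/-- length of the cycle of `x` under the permutation part of `w`. -/
noncomputable def d (w : W G ι) (x : ι) : ℕ := minimalPeriod w.right x

/-- the cycle product at `x`. -/
noncomputable def P (w : W G ι) (x : ι) : G := (w ^ d w x).left x

/-- the basic point-level invariant. -/
noncomputable def Φ (w : W G ι) (x : ι) : ℕ × ConjClasses G :=
  (d w x, ConjClasses.mk (P w x))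

/-- fiber counts of the invariant: the separating class function. -/
noncomputable def N (w : W G ι) (v : ℕ × ConjClasses G) : ℕ :=
  Nat.card {x : ι // Φ w x = v}

lemma iterate_right (w : W G ι) (m : ℕ) (x : ι) :
    (⇑w.right)^[m] x = (w.right ^ m) x := by
  rw [← Equiv.Perm.iterate_eq_pow]

lemma d_pos [Finite ι] (w : W G ι) (x : ι) : 0 < d w x := by
  have : IsPeriodicPt (⇑w.right) (orderOf w.right) x := by
    unfold IsPeriodicPt IsFixedPt
    rw [iterate_right, pow_orderOf_eq_one]; rfl
  exact minimalPeriod_pos_of_mem_periodicPts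
    (mem_periodicPts.2 ⟨orderOf w.right, orderOf_pos _, this⟩)

lemma pow_d_fix (w : W G ι) (x : ι) : (w.right ^ d w x) x = x := by
  rw [← iterate_right]
  exact isPeriodicPt_minimalPeriod _ _

lemma pow_mod_d (w : W G ι) (x : ι) (m : ℕ) :
    (w.right ^ (m % d w x)) x = (w.right ^ m) x := by
  rw [← iterate_right, ← iterate_right]
  exact iterate_mod_minimalPeriod_eq


lemma d_apply (w : W G ι) (x : ι) : d w (w.right x) = d w x :=
  minimalPeriod_semiconj (w.right : ι ≃ ι) (fun _ => rfl) x

lemma P_apply (w : W G ι) (x : ι) :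
    P w (w.right x) = w.left (w.right x) * P w x * (w.left (w.right x))⁻¹ := by
  set π := w.right
  set α := w.left
  have hd : d w (π x) = d w x := d_apply w x
  have hcomm : (w * w ^ d w x).left (π x) = (w ^ d w x * w).left (π x) := by
    rw [← pow_succ, ← pow_succ']
  rw [mul_left', mul_left'] at hcomm
  have h1 : w.right⁻¹ (π x) = x := Equiv.symm_apply_apply _ _
  have h2 : (w ^ d w x).right⁻¹ (π x) = π x := by
    rw [right_pow]
    have hcm : π * π ^ d w x = π ^ d w x * π := (Commute.self_pow π _).eq
    have key : (π ^ d w x) (π x) = π x := by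
      calc (π ^ d w x) (π x) = ((π ^ d w x) * π) x := rfl
      _ = (π * (π ^ d w x)) x := by rw [hcm]
      _ = π ((π ^ d w x) x) := rfl
      _ = π x := by rw [pow_d_fix w x]
    exact (Equiv.symm_apply_eq _).2 key.symm
  rw [h1] at hcomm
  rw [h2] at hcomm
  -- hcomm : α (π x) * (w ^ d w x).left x = (w ^ d w x).left (π x) * α (π x)
  have key : (w ^ d w x).left (π x) = α (π x) * (w ^ d w x).left x * (α (π x))⁻¹ := by
    rw [eq_mul_inv_iff_mul_eq]
    exact hcomm.symm
  have hthis : P w (π x) = (w ^ d w x).left (π x) := by unfold P; rw [hd]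
  rw [hthis, key]
  rfl

lemma Φ_apply (w : W G ι) (x : ι) : Φ w (w.right x) = Φ w x := by
  unfold Φ
  rw [d_apply]
  congr 1
  rw [P_apply]
  exact ConjClasses.mk_eq_mk_iff_isConj.2 (isConj_iff.2 ⟨(w.left (w.right x))⁻¹, by group⟩)

lemma Φ_pow_apply (w : W G ι) (m : ℕ) (x : ι) : Φ w ((w.right ^ m) x) = Φ w x := by
  induction m with
  | zero => rfl
  | succ m ih =>
      have : (w.right ^ (m + 1)) x = w.right ((w.right ^ m) x) := by
        rw [pow_succ']; rfl
      rw [this, Φ_apply, ih]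

lemma Φ_sameCycle [Finite ι] (w : W G ι) {x y : ι} (h : w.right.SameCycle x y) :
    Φ w x = Φ w y := by
  obtain ⟨i, _, rfl⟩ := h.exists_pow_eq'
  rw [Φ_pow_apply]

lemma Φ_conj (c w : W G ι) (x : ι) : Φ (c * w * c⁻¹) (c.right x) = Φ w x := by
  have hright : (c * w * c⁻¹).right = c.right * w.right * c.right⁻¹ := rfl
  have hd : d (c * w * c⁻¹) (c.right x) = d w x := by
    apply minimalPeriod_semiconj (c.right : ι ≃ ι)
    intro y
    show (c.right * w.right * c.right⁻¹) (c.right y) = c.right (w.right y)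
    simp [Equiv.Perm.mul_apply]
  unfold Φ
  rw [hd]
  refine Prod.ext rfl ?_
  have hPP : P (c * w * c⁻¹) (c.right x)
      = c.left (c.right x) * P w x * (c.left (c.right x))⁻¹ := by
    unfold P
    rw [hd]
    have hpow : (c * w * c⁻¹) ^ d w x = c * w ^ d w x * c⁻¹ := by
      have := map_pow (MulAut.conj c) w (d w x)
      simpa [MulAut.conj_apply] using this
    rw [hpow]
    rw [mul_left', mul_left']
    have h1 : c.right⁻¹ (c.right x) = x := Equiv.symm_apply_apply _ _
    have h2 : (c * w ^ d w x).right⁻¹ (c.right x) = x := by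
      show (c.right * (w ^ d w x).right)⁻¹ (c.right x) = x
      rw [right_pow, mul_inv_rev]
      show (w.right ^ d w x)⁻¹ (c.right⁻¹ (c.right x)) = x
      rw [h1]
      have : (w.right ^ d w x) x = x := pow_d_fix w x
      exact (Equiv.symm_apply_eq _).2 this.symm
    rw [h1, h2]
    have h3 : (c⁻¹).left x = (c.left (c.right x))⁻¹ := by
      show (wc G ι c.right⁻¹ (c.left)⁻¹) x = _
      rw [wc_apply]
      simp
    rw [h3]
  rw [hPP]
  exact ConjClasses.mk_eq_mk_iff_isConj.2 (isConj_iff.2 ⟨(c.left (c.right x))⁻¹, by group⟩)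

lemma N_conj {w w' : W G ι} (h : IsConj w w') (v : ℕ × ConjClasses G) : N w v = N w' v := by
  obtain ⟨c, hc⟩ := isConj_iff.1 h
  subst hc
  unfold N
  apply Nat.card_congr
  exact Equiv.subtypeEquiv (c.right : ι ≃ ι) (fun x => by rw [Φ_conj c w x])


section Orbits

/-- the setoid of cycles of the permutation part. -/
def sc (w : W G ι) : Setoid ι :=
  ⟨w.right.SameCycle, ⟨fun x => Equiv.Perm.SameCycle.refl _ _,
    fun h => h.symm, fun h1 h2 => h1.trans h2⟩⟩

/-- the set of cycles (orbits) of `w`. -/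
def Q (w : W G ι) := Quotient (sc w)

/-- the invariant, descended to orbits. -/
noncomputable def ℓw (w : W G ι) [Finite ι] : Q w → ℕ × ConjClasses G :=
  Quotient.lift (Φ w) (fun _ _ h => (Φ_sameCycle w h).symm ▸ rfl)

variable [Fintype ι]

noncomputable instance (w : W G ι) : Fintype (Q w) := by
  classical exact Quotient.fintype (sc w)

lemma ℓw_mk (w : W G ι) (x : ι) : ℓw w (Quotient.mk (sc w) x) = Φ w x := rfl

lemma mk_out {w : W G ι} (q : Q w) : Quotient.mk (sc w) q.out = q := Quotient.out_eq q

lemma ℓw_fst (w : W G ι) (q : Q w) : (ℓw w q).1 = d w q.out := by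
  conv_lhs => rw [← mk_out q, ℓw_mk]
  rfl

lemma ℓw_fst_pos (w : W G ι) (q : Q w) : 0 < (ℓw w q).1 := by
  rw [ℓw_fst]; exact d_pos w _

/-- parametrization of an orbit by `Fin (length)`. -/
noncomputable def orbF (w : W G ι) (q : Q w) :
    Fin (ℓw w q).1 → {x : ι // Quotient.mk (sc w) x = q} := fun k =>
  ⟨(w.right ^ (k : ℕ)) q.out, by
    refine (Quotient.sound ?_).trans (mk_out q)
    exact Equiv.Perm.SameCycle.symm
      (⟨((k : ℕ) : ℤ), by rw [zpow_natCast]⟩ : w.right.SameCycle q.out _)⟩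

lemma orbF_bijective (w : W G ι) (q : Q w) : Function.Bijective (orbF w q) := by
  constructor
  · intro k1 k2 h
    have h' : (w.right ^ (k1 : ℕ)) q.out = (w.right ^ (k2 : ℕ)) q.out :=
      congrArg Subtype.val h
    have h'' : (⇑w.right)^[(k1 : ℕ)] q.out = (⇑w.right)^[(k2 : ℕ)] q.out := by
      rw [iterate_right, iterate_right]; exact h'
    have hlt1 : (k1 : ℕ) ∈ Set.Iio (minimalPeriod (⇑w.right) q.out) :=
      lt_of_lt_of_eq k1.2 (ℓw_fst w q)
    have hlt2 : (k2 : ℕ) ∈ Set.Iio (minimalPeriod (⇑w.right) q.out) :=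
      lt_of_lt_of_eq k2.2 (ℓw_fst w q)
    exact Fin.ext (iterate_injOn_Iio_minimalPeriod hlt1 hlt2 h'')
  · rintro ⟨u, hu⟩
    have hsc : w.right.SameCycle q.out u := by
      have := Quotient.exact (hu.trans (mk_out q).symm)
      exact Equiv.Perm.SameCycle.symm this
    obtain ⟨i, _, hi⟩ := hsc.exists_pow_eq'
    have hmod : (w.right ^ (i % d w q.out)) q.out = u := by
      rw [pow_mod_d]; exact hi
    refine ⟨⟨i % d w q.out, ?_⟩, Subtype.ext hmod⟩
    rw [ℓw_fst]
    exact Nat.mod_lt _ (d_pos w _)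

/-- coordinates on an orbit. -/
noncomputable def orbE (w : W G ι) (q : Q w) :
    {x : ι // Quotient.mk (sc w) x = q} ≃ Fin (ℓw w q).1 :=
  (Equiv.ofBijective (orbF w q) (orbF_bijective w q)).symm

/-- decomposition of a `Φ`-fiber into orbits. -/
noncomputable def fiberDecomp (w : W G ι) (v : ℕ × ConjClasses G) :
    {x : ι // Φ w x = v} ≃
      Σ q : {q : Q w // ℓw w q = v}, {x : ι // Quotient.mk (sc w) x = q.1} where
  toFun x := ⟨⟨Quotient.mk (sc w) x.1, by rw [ℓw_mk, x.2]⟩, ⟨x.1, rfl⟩⟩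
  invFun p := ⟨p.2.1, by
    have : Φ w p.2.1 = ℓw w (Quotient.mk (sc w) p.2.1) := rfl
    rw [this, p.2.2, p.1.2]⟩
  left_inv x := rfl
  right_inv := by
    rintro ⟨⟨qv, hq⟩, u, hu⟩
    have hu' : Quotient.mk (sc w) u = qv := hu
    subst hu'
    rfl

lemma N_card (w : W G ι) (v : ℕ × ConjClasses G) :
    N w v = v.1 * Nat.card {q : Q w // ℓw w q = v} := by
  classical
  have hfib : ∀ q : {q : Q w // ℓw w q = v},
      Nat.card {x : ι // Quotient.mk (sc w) x = q.1} = v.1 := by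
    intro q
    rw [Nat.card_congr (orbE w q.1)]
    simp [q.2]
  rw [N, Nat.card_congr (fiberDecomp w v), Nat.card_eq_fintype_card, Fintype.card_sigma]
  have : ∀ q : {q : Q w // ℓw w q = v},
      Fintype.card {x : ι // Quotient.mk (sc w) x = q.1} = v.1 := by
    intro q; rw [← Nat.card_eq_fintype_card]; exact hfib q
  rw [Finset.sum_congr rfl (fun q _ => this q), Finset.sum_const, smul_eq_mul,
    Finset.card_univ, ← Nat.card_eq_fintype_card, mul_comm]

end Orbits


section Matching

variable [Fintype ι]

lemma exists_matching_perm {w w' : W G ι} (hN : ∀ v, N w v = N w' v) :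
    ∃ σ : Equiv.Perm ι,
      (∀ x, σ (w.right x) = w'.right (σ x)) ∧ (∀ x, Φ w' (σ x) = Φ w x) := by
  classical
  have hQ : ∀ v, Nat.card {q : Q w // ℓw w q = v} = Nat.card {q : Q w' // ℓw w' q = v} := by
    intro v
    rcases Nat.eq_zero_or_pos v.1 with h0 | hpos
    · have e1 : IsEmpty {q : Q w // ℓw w q = v} := ⟨fun q => by
        have h := ℓw_fst_pos w q.1; rw [q.2, h0] at h; exact Nat.lt_irrefl 0 h⟩
      have e2 : IsEmpty {q : Q w' // ℓw w' q = v} := ⟨fun q => by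
        have h := ℓw_fst_pos w' q.1; rw [q.2, h0] at h; exact Nat.lt_irrefl 0 h⟩
      rw [Nat.card_of_isEmpty, Nat.card_of_isEmpty]
    · have hv := hN v
      rw [N_card, N_card] at hv
      exact Nat.eq_of_mul_eq_mul_left hpos hv
  have fe : ∀ v, {q : Q w // ℓw w q = v} ≃ {q : Q w' // ℓw w' q = v} := fun v =>
    Fintype.equivOfCardEq (by
      rw [← Nat.card_eq_fintype_card, ← Nat.card_eq_fintype_card]; exact hQ v)
  let τ : Q w ≃ Q w' := Equiv.ofFiberEquiv (f := ℓw w) (g := ℓw w') fe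
  have hτ : ∀ q, ℓw w' (τ q) = ℓw w q := fun q => Equiv.ofFiberEquiv_map fe q
  let oe : ∀ q : Q w,
      {x : ι // Quotient.mk (sc w) x = q} ≃ {x : ι // Quotient.mk (sc w') x = τ q} :=
    fun q => (orbE w q).trans ((finCongr (by rw [hτ q])).trans (orbE w' (τ q)).symm)
  let A := Equiv.sigmaFiberEquiv (fun x : ι => Quotient.mk (sc w) x)
  let A' := Equiv.sigmaFiberEquiv (fun x : ι => Quotient.mk (sc w') x)
  let σ : Equiv.Perm ι := (A.symm.trans (Equiv.sigmaCongr (β₂ := fun q => {x : ι // Quotient.mk (sc w') x = q}) τ oe)).trans A'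
  have hσ : ∀ x : ι, σ x = (oe (Quotient.mk (sc w) x) ⟨x, rfl⟩).1 := fun x => rfl
  have hmkσ : ∀ x : ι, Quotient.mk (sc w') (σ x) = τ (Quotient.mk (sc w) x) := by
    intro x
    rw [hσ x]
    exact (oe (Quotient.mk (sc w) x) ⟨x, rfl⟩).2
  have hΦσ : ∀ x, Φ w' (σ x) = Φ w x := by
    intro x
    calc Φ w' (σ x) = ℓw w' (Quotient.mk (sc w') (σ x)) := (ℓw_mk _ _).symm
    _ = ℓw w' (τ (Quotient.mk (sc w) x)) := by rw [hmkσ]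
    _ = ℓw w (Quotient.mk (sc w) x) := hτ _
    _ = Φ w x := ℓw_mk _ _
  have horbE : ∀ (q : Q w) (j : Fin (ℓw w q).1), orbE w q (orbF w q j) = j := fun q j =>
    Equiv.symm_apply_apply (Equiv.ofBijective (orbF w q) (orbF_bijective w q)) j
  have hstar : ∀ (q : Q w) (u : {y : ι // Quotient.mk (sc w) y = q}),
      σ u.1 = (w'.right ^ ((orbE w q u : Fin (ℓw w q).1) : ℕ)) (τ q).out := by
    intro q u
    obtain ⟨y, hy⟩ := u
    subst hy
    show σ y = (w'.right ^
      ((orbE w (Quotient.mk (sc w) y) ⟨y, rfl⟩ : Fin _) : ℕ)) (τ (Quotient.mk (sc w) y)).out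
    have hu : orbF w (Quotient.mk (sc w) y) (orbE w (Quotient.mk (sc w) y) ⟨y, rfl⟩)
        = ⟨y, rfl⟩ := Equiv.symm_apply_apply (orbE w (Quotient.mk (sc w) y)) ⟨y, rfl⟩
    rw [hσ y]
    conv_lhs => rw [← hu]
    have hthis : (oe (Quotient.mk (sc w) y))
          (orbF w (Quotient.mk (sc w) y) (orbE w (Quotient.mk (sc w) y) ⟨y, rfl⟩)) =
        (orbE w' (τ (Quotient.mk (sc w) y))).symm
          (finCongr (by rw [hτ (Quotient.mk (sc w) y)])
            (orbE w (Quotient.mk (sc w) y) ⟨y, rfl⟩)) := by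
      show (orbE w' _).symm (finCongr _ (orbE w _ (orbF w _ _))) = _
      erw [horbE]
    rw [hthis]
    rfl
  refine ⟨σ, ?_, hΦσ⟩
  intro x
  have hqx : Quotient.mk (sc w) (w.right x) = Quotient.mk (sc w) x :=
    Quotient.sound (Equiv.Perm.SameCycle.symm ⟨1, by rw [zpow_one]⟩)
  set q := Quotient.mk (sc w) x with hq
  set k := orbE w q ⟨x, rfl⟩ with hk
  have hx : (w.right ^ ((k : Fin (ℓw w q).1) : ℕ)) q.out = x :=
    congrArg Subtype.val (Equiv.symm_apply_apply (orbE w q) ⟨x, rfl⟩)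
  have hlen : (ℓw w q).1 = d w q.out := ℓw_fst w q
  have hpos : 0 < (ℓw w q).1 := ℓw_fst_pos w q
  have key : ∀ n : ℕ, (w.right ^ n) q.out = x →
      (w.right ^ ((n + 1) % (ℓw w q).1)) q.out = w.right x := by
    intro n hn
    rw [hlen, pow_mod_d w q.out (n + 1), pow_succ']
    show w.right ((w.right ^ n) q.out) = w.right x
    rw [hn]
  have hk2 : orbF w q ⟨((k : ℕ) + 1) % (ℓw w q).1, Nat.mod_lt _ hpos⟩
      = ⟨w.right x, hqx⟩ := Subtype.ext (key _ hx)
  have hval : ((orbE w q ⟨w.right x, hqx⟩ : Fin (ℓw w q).1) : ℕ)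
      = ((k : ℕ) + 1) % (ℓw w q).1 := by
    rw [← hk2]; erw [horbE]
  have hd' : d w' (τ q).out = (ℓw w q).1 := by
    rw [← ℓw_fst w' (τ q), hτ q]
  calc σ (w.right x)
      = (w'.right ^ ((orbE w q ⟨w.right x, hqx⟩ : Fin (ℓw w q).1) : ℕ)) (τ q).out :=
        hstar q ⟨w.right x, hqx⟩
  _ = (w'.right ^ (((k : ℕ) + 1) % (ℓw w q).1)) (τ q).out := by rw [hval]
  _ = (w'.right ^ (((k : ℕ) + 1) % d w' (τ q).out)) (τ q).out := by rw [hd']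
  _ = (w'.right ^ ((k : ℕ) + 1)) (τ q).out := pow_mod_d w' (τ q).out _
  _ = w'.right ((w'.right ^ (k : ℕ)) (τ q).out) := by rw [pow_succ']; rfl
  _ = w'.right (σ x) := by rw [← hstar q ⟨x, rfl⟩]

end Matching


section BaseConj

lemma baseConj_left (β : ι → G) (w : W G ι) (x : ι) :
    ((⟨β, 1⟩ : W G ι) * w * (⟨β, 1⟩ : W G ι)⁻¹).left x
      = β x * w.left x * (β (w.right⁻¹ x))⁻¹ := by
  rw [mul_left', mul_left']
  have h1 : ((⟨β, 1⟩ : W G ι) * w).right = w.right := by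
    rw [SemidirectProduct.mul_right]; simp
  have h2 : ((⟨β, 1⟩ : W G ι)).right = 1 := rfl
  have h3 : ((⟨β, 1⟩ : W G ι))⁻¹.left = β⁻¹ := by
    rw [SemidirectProduct.inv_left]
    show wc G ι (1 : Equiv.Perm ι)⁻¹ β⁻¹ = β⁻¹
    rw [inv_one, map_one]; rfl
  rw [h1, h3]
  show β x * w.left (((1 : Equiv.Perm ι))⁻¹ x) * (β⁻¹) (w.right⁻¹ x) = _
  simp

lemma baseConj_right (β : ι → G) (w : W G ι) :
    ((⟨β, 1⟩ : W G ι) * w * (⟨β, 1⟩ : W G ι)⁻¹).right = w.right := by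
  rw [SemidirectProduct.mul_right, SemidirectProduct.mul_right, SemidirectProduct.inv_right]
  show 1 * w.right * (1 : Equiv.Perm ι)⁻¹ = w.right
  simp

end BaseConj

section E2

variable [Fintype ι]

lemma isConj_of_right_eq {w w' : W G ι} (hr : w.right = w'.right)
    (hΦ : ∀ x, Φ w x = Φ w' x) : IsConj w w' := by
  classical
  -- basic consequences
  have hd : ∀ y, d w y = d w' y := fun y => by unfold d; rw [hr]
  have hP : ∀ y, ConjClasses.mk (P w y) = ConjClasses.mk (P w' y) := fun y =>
    congrArg Prod.snd (hΦ y)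
  -- base point of the cycle of x
  let bp : ι → ι := fun x => (Quotient.mk (sc w) x).out
  have hbp_sc : ∀ x, w.right.SameCycle (bp x) x := fun x =>
    Quotient.exact (mk_out (Quotient.mk (sc w) x))
  have hbpbp : ∀ x, bp (bp x) = bp x := fun x =>
    congrArg Quotient.out (mk_out (Quotient.mk (sc w) x))
  have hdb : ∀ x, d w (bp x) = d w x := fun x =>
    congrArg Prod.fst (Φ_sameCycle w (hbp_sc x))
  -- distance to the base point
  have ex : ∀ x : ι, ∃ m : ℕ, (w.right ^ m) x = bp x := by
    intro x
    obtain ⟨i, _, hi⟩ := (Equiv.Perm.SameCycle.symm (hbp_sc x)).exists_pow_eq'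
    exact ⟨i, hi⟩
  let kk : ι → ℕ := fun x => Nat.find (ex x)
  have hkspec : ∀ x, (w.right ^ kk x) x = bp x := fun x => Nat.find_spec (ex x)
  have hklt : ∀ x, kk x < d w x := by
    intro x
    obtain ⟨m, hm⟩ := ex x
    have hm' : (w.right ^ (m % d w x)) x = bp x := by rw [pow_mod_d]; exact hm
    exact lt_of_le_of_lt (Nat.find_min' (ex x) hm') (Nat.mod_lt _ (d_pos w x))
  -- conjugators at the base points
  have hconj : ∀ b : ι, ∃ h : G, h * P w b * h⁻¹ = P w' b := fun b =>
    isConj_iff.1 (ConjClasses.mk_eq_mk_iff_isConj.1 (hP b))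
  let hf : ι → G := fun b => Classical.choose (hconj b)
  have hfspec : ∀ b, hf b * P w b * (hf b)⁻¹ = P w' b := fun b =>
    Classical.choose_spec (hconj b)
  -- the conjugating base element
  let β : ι → G := fun x =>
    ((w' ^ kk x).left (bp x))⁻¹ * hf (bp x) * ((w ^ kk x).left (bp x))
  have βdef : ∀ x, β x = ((w' ^ kk x).left (bp x))⁻¹ * hf (bp x) * ((w ^ kk x).left (bp x)) :=
    fun _ => rfl
  refine isConj_iff.2 ⟨⟨β, 1⟩, ?_⟩
  apply SemidirectProduct.ext
  swap
  · rw [baseConj_right, hr]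
  funext x
  rw [baseConj_left]
  -- key facts valid for every x
  have hbp1 : ∀ y, Quotient.mk (sc w) (w.right⁻¹ y) = Quotient.mk (sc w) y := fun y =>
    Quotient.sound (⟨1, by simp⟩ : w.right.SameCycle (w.right⁻¹ y) y)
  have hbpinv : bp (w.right⁻¹ x) = bp x := congrArg Quotient.out (hbp1 x)
  have hxinv : ∀ (m : ℕ) (y z : ι), (w.right ^ m) y = z → (w.right ^ m)⁻¹ z = y := by
    intro m y z h
    rw [← h]
    exact Equiv.symm_apply_apply _ _
  have hx_eq : (w.right ^ kk x)⁻¹ (bp x) = x := hxinv _ _ _ (hkspec x)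
  -- the two expansions of the cycle products
  have e1 : (w ^ (kk x + 1)).left (bp x) = (w ^ kk x).left (bp x) * w.left x := by
    rw [pow_left_succ, hx_eq]
  have hx_eq' : (w'.right ^ kk x)⁻¹ (bp x) = x := by rw [← hr]; exact hx_eq
  have e2 : (w' ^ (kk x + 1)).left (bp x) = (w' ^ kk x).left (bp x) * w'.left x := by
    rw [pow_left_succ, hx_eq']
  by_cases hb : w.right⁻¹ x = bp x
  · -- wrap-around case: `x` is the last point of its cycle
    have hx' : x = w.right (bp x) := Equiv.Perm.inv_eq_iff_eq.1 hb
    have hkD : kk x + 1 = d w (bp x) := by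
      have hper : (w.right ^ (kk x + 1)) (bp x) = bp x := by
        rw [pow_succ]
        show (w.right ^ kk x) (w.right (bp x)) = bp x
        rw [← hx']
        exact hkspec x
      have hdvd : d w (bp x) ∣ kk x + 1 := by
        apply Function.IsPeriodicPt.minimalPeriod_dvd
        unfold Function.IsPeriodicPt Function.IsFixedPt
        rw [iterate_right]
        exact hper
      have hle : kk x + 1 ≤ d w (bp x) := by
        rw [hdb x]; exact hklt x
      exact Nat.le_antisymm hle (Nat.le_of_dvd (Nat.succ_pos _) hdvd)
    have eP1 : (w ^ kk x).left (bp x) * w.left x = P w (bp x) := by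
      rw [← e1, hkD]; rfl
    have hdd' : kk x + 1 = d w' (bp x) := hkD.trans (hd (bp x))
    have eP2 : (w' ^ kk x).left (bp x) * w'.left x = P w' (bp x) := by
      rw [← e2, hdd']; rfl
    -- kk (bp x) = 0
    have hk0 : kk (bp x) = 0 := by
      rw [Nat.find_eq_zero (ex (bp x))]
      show (w.right ^ 0) (bp x) = bp (bp x)
      rw [pow_zero, hbpbp]
      rfl
    have hβb : β (bp x) = hf (bp x) := by
      rw [βdef, hk0, hbpbp, pow_zero, pow_zero]
      show ((1 : W G ι).left (bp x))⁻¹ * hf (bp x) * ((1 : W G ι).left (bp x)) = _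
      rw [SemidirectProduct.one_left]
      show (1 : G)⁻¹ * hf (bp x) * (1 : G) = _
      group
    rw [hb, hβb, βdef]
    set Lw := (w ^ kk x).left (bp x)
    set Lw' := (w' ^ kk x).left (bp x)
    set h := hf (bp x)
    have halg : Lw'⁻¹ * h * Lw * w.left x * h⁻¹
        = Lw'⁻¹ * (h * (Lw * w.left x) * h⁻¹) := by group
    rw [halg, eP1, hfspec, ← eP2]
    group
  · -- generic case: step within the cycle
    have hknext : kk (w.right⁻¹ x) = kk x + 1 := by
      rw [Nat.find_eq_iff (ex (w.right⁻¹ x))]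
      constructor
      · show (w.right ^ (kk x + 1)) (w.right⁻¹ x) = bp (w.right⁻¹ x)
        rw [hbpinv, pow_succ]
        show (w.right ^ kk x) (w.right (w.right⁻¹ x)) = bp x
        erw [Equiv.apply_symm_apply]
        exact hkspec x
      · intro j hj
        show ¬ (w.right ^ j) (w.right⁻¹ x) = bp (w.right⁻¹ x)
        rw [hbpinv]
        cases j with
        | zero =>
            rw [pow_zero]
            show ¬ (w.right⁻¹ x) = bp x
            exact hb
        | succ i =>
            intro hcon
            have : (w.right ^ i) x = bp x := by
              rw [← hcon, pow_succ]
              show (w.right ^ i) x = (w.right ^ i) (w.right (w.right⁻¹ x))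
              erw [Equiv.apply_symm_apply]
            exact Nat.find_min (ex x) (show i < kk x by omega) this
    rw [βdef, βdef, hknext, hbpinv, e1, e2]
    set Lw := (w ^ kk x).left (bp x)
    set Lw' := (w' ^ kk x).left (bp x)
    set h := hf (bp x)
    group

end E2


section Master

variable [Fintype ι]

lemma isConj_iff_N {w w' : W G ι} : IsConj w w' ↔ ∀ v, N w v = N w' v := by
  constructor
  · exact fun h v => N_conj h v
  · intro hN
    obtain ⟨σ, hσcomm, hσΦ⟩ := exists_matching_perm hN
    let c : W G ι := ⟨1, σ⟩
    have hc : IsConj w (c * w * c⁻¹) := isConj_iff.2 ⟨c, rfl⟩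
    refine hc.symm.symm.trans (isConj_of_right_eq ?_ ?_)
    · show σ * w.right * σ⁻¹ = w'.right
      ext x
      show σ (w.right (σ⁻¹ x)) = w'.right x
      rw [hσcomm (σ⁻¹ x)]
      congr 1
      exact Equiv.apply_symm_apply σ x
    · intro y
      have h1 : Φ (c * w * c⁻¹) (σ (σ⁻¹ y)) = Φ w (σ⁻¹ y) := Φ_conj c w (σ⁻¹ y)
      have h2 : Φ w' (σ (σ⁻¹ y)) = Φ w (σ⁻¹ y) := hσΦ (σ⁻¹ y)
      have h3 : σ (σ⁻¹ y) = y := Equiv.apply_symm_apply σ y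
      rw [h3] at h1 h2
      rw [h1, h2]

end Master

section Transport

variable {κ : Type*}

/-- transport of the wreath product along an equivalence of index types. -/
def mapW (e : κ ≃ ι) : W G κ →* W G ι where
  toFun w := ⟨w.left ∘ e.symm, e.permCongr w.right⟩
  map_one' := by
    apply SemidirectProduct.ext
    · rfl
    · ext x; simp
  map_mul' := fun a b => by
    have hinv : ∀ (π : Equiv.Perm κ) (x : ι), (e.permCongr π)⁻¹ x = e (π⁻¹ (e.symm x)) := by
      intro π x
      apply Equiv.Perm.inv_eq_iff_eq.2
      simp
    apply SemidirectProduct.ext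
    · funext x
      show (a * b).left (e.symm x) = _
      rw [mul_left']
      show a.left (e.symm x) * b.left (a.right⁻¹ (e.symm x))
        = a.left (e.symm x) * b.left (e.symm ((e.permCongr a.right)⁻¹ x))
      rw [hinv]
      simp
    · ext x
      simp

lemma mapW_left (e : κ ≃ ι) (w : W G κ) (x : κ) : (mapW e w).left (e x) = w.left x := by
  show w.left (e.symm (e x)) = w.left x
  rw [Equiv.symm_apply_apply]

lemma mapW_right (e : κ ≃ ι) (w : W G κ) (x : κ) :
    (mapW e w).right (e x) = e (w.right x) := by
  show e.permCongr w.right (e x) = _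
  simp

variable [Fintype ι] [Fintype κ]

lemma Φ_mapW (e : κ ≃ ι) (w : W G κ) (x : κ) : Φ (mapW e w) (e x) = Φ w x := by
  have hd : d (mapW e w) (e x) = d w x :=
    minimalPeriod_semiconj e (fun y => mapW_right e w y) x
  unfold Φ
  rw [hd]
  have hP2 : P (mapW e w) (e x) = P w x := by
    unfold P
    rw [hd, ← map_pow]
    exact mapW_left e (w ^ d w x) x
  rw [hP2]

lemma N_mapW (e : κ ≃ ι) (w : W G κ) (v : ℕ × ConjClasses G) :
    N (mapW e w) v = N w v := by
  unfold N
  apply Nat.card_congr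
  exact (Equiv.subtypeEquiv e (fun x => by rw [Φ_mapW])).symm

end Transport


section Standard

variable [Fintype G]

noncomputable instance : Fintype (ConjClasses G) := by
  classical exact Quotient.fintype (IsConj.setoid G)

variable (f : ConjClasses G → Σ m : ℕ, Nat.Partition m)

/-- the list of parts of the partition attached to the class `c`. -/
noncomputable def Lf (c : ConjClasses G) : List ℕ := (f c).2.parts.toList

lemma Lf_mem_parts (c : ConjClasses G) (j : Fin (Lf f c).length) :
    (Lf f c).get j ∈ (f c).2.parts := by
  rw [← Multiset.mem_toList]
  exact List.get_mem _ _

lemma Lf_pos (c : ConjClasses G) (j : Fin (Lf f c).length) : 0 < (Lf f c).get j :=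
  (f c).2.parts_pos (Lf_mem_parts f c j)

instance (c : ConjClasses G) (j : Fin (Lf f c).length) : NeZero ((Lf f c).get j) :=
  NeZero.of_pos (Lf_pos f c j)

/-- the index type realizing the standard form attached to the data `f`. -/
def Tf := Σ c : ConjClasses G, Σ j : Fin (Lf f c).length, ZMod ((Lf f c).get j)

noncomputable instance : Fintype (Tf f) := by unfold Tf; infer_instance

/-- the standard form element attached to the data `f`. -/
noncomputable def wf : W G (Tf f) :=
  ⟨fun x => if x.2.2 = 0 then Quotient.out x.1 else 1,
    Equiv.sigmaCongrRight (fun c =>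
      Equiv.sigmaCongrRight (fun j => Equiv.addRight (1 : ZMod ((Lf f c).get j))))⟩

lemma wf_right_pow (m : ℕ) (c : ConjClasses G) (j : Fin (Lf f c).length)
    (z : ZMod ((Lf f c).get j)) :
    ((wf f).right ^ m) ⟨c, j, z⟩ = ⟨c, j, z + (m : ZMod ((Lf f c).get j))⟩ := by
  induction m with
  | zero => simp; rfl
  | succ m ih =>
      rw [pow_succ']
      show (wf f).right (((wf f).right ^ m) ⟨c, j, z⟩) = _
      rw [ih]
      show (⟨c, j, z + (m : ZMod ((Lf f c).get j)) + 1⟩ : Tf f) = _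
      have h3 : z + (m : ZMod ((Lf f c).get j)) + 1
          = z + ((m + 1 : ℕ) : ZMod ((Lf f c).get j)) := by push_cast; ring
      exact congrArg (fun t => (⟨c, j, t⟩ : Tf f)) h3

lemma d_wf (c : ConjClasses G) (j : Fin (Lf f c).length) (z : ZMod ((Lf f c).get j)) :
    d (wf f) ⟨c, j, z⟩ = (Lf f c).get j := by
  have hper : ∀ m : ℕ,
      Function.IsPeriodicPt (⇑(wf f).right) m ⟨c, j, z⟩ ↔ (Lf f c).get j ∣ m := by
    intro m
    unfold Function.IsPeriodicPt Function.IsFixedPt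
    erw [iterate_right, wf_right_pow]
    constructor
    · intro h
      have h1 := (Sigma.mk.inj_iff.1 h).2
      have h2 := eq_of_heq h1
      have h3 := eq_of_heq (Sigma.mk.inj_iff.1 h2).2
      have h4 : (m : ZMod ((Lf f c).get j)) = 0 := by
        have := add_eq_left.1 h3
        exact this
      exact (ZMod.natCast_eq_zero_iff m _).1 h4
    · intro hd
      have : (m : ZMod ((Lf f c).get j)) = 0 := (ZMod.natCast_eq_zero_iff m _).2 hd
      rw [this, add_zero]
  apply Nat.dvd_antisymm
  · exact Function.IsPeriodicPt.minimalPeriod_dvd ((hper _).2 dvd_rfl)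
  · exact (hper _).1 (Function.isPeriodicPt_minimalPeriod _ _)

lemma pow_left_wf (c : ConjClasses G) (j : Fin (Lf f c).length)
    (z : ZMod ((Lf f c).get j)) :
    ∀ m : ℕ, m ≤ (Lf f c).get j →
      ((wf f) ^ m).left ⟨c, j, z⟩ = if z.val < m then Quotient.out c else 1 := by
  intro m
  induction m with
  | zero =>
      intro _
      rw [pow_zero]
      show (1 : W G (Tf f)).left _ = _
      rw [SemidirectProduct.one_left]
      simp; rfl
  | succ m ih =>
      intro hm
      erw [pow_left_succ, ih (Nat.le_of_succ_le hm)]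
      have hinv : ((wf f).right ^ m)⁻¹ ⟨c, j, z⟩
          = ⟨c, j, z - (m : ZMod ((Lf f c).get j))⟩ := by
        apply Equiv.Perm.inv_eq_iff_eq.2
        rw [wf_right_pow]
        have h3 : z = z - (m : ZMod ((Lf f c).get j)) + (m : ZMod ((Lf f c).get j)) := by
          ring
        exact congrArg (fun t => (⟨c, j, t⟩ : Tf f)) h3
      rw [hinv]
      show _ * (if z - (m : ZMod ((Lf f c).get j)) = 0 then Quotient.out c else 1) = _
      have hz : z - (m : ZMod ((Lf f c).get j)) = 0 ↔ z.val = m := by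
        rw [sub_eq_zero]
        constructor
        · intro h; rw [h]; exact ZMod.val_cast_of_lt (by omega)
        · intro h; rw [← h, ZMod.natCast_zmod_val]
      rcases lt_trichotomy z.val m with hlt | heq | hgt
      · rw [if_pos hlt, if_neg (by rw [hz]; omega), if_pos (by omega), mul_one]
      · rw [if_neg (by omega), if_pos (hz.2 heq), one_mul, if_pos (by omega)]
      · rw [if_neg (by omega), if_neg (by rw [hz]; omega), if_neg (by omega), mul_one]

lemma Φ_wf (c : ConjClasses G) (j : Fin (Lf f c).length) (z : ZMod ((Lf f c).get j)) :
    Φ (wf f) ⟨c, j, z⟩ = ((Lf f c).get j, c) := by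
  have hP : P (wf f) ⟨c, j, z⟩ = Quotient.out c := by
    unfold P
    rw [d_wf, pow_left_wf f c j z _ le_rfl, if_pos (ZMod.val_lt z)]
  unfold Φ
  rw [d_wf, hP]
  exact Prod.ext rfl (Quotient.out_eq c)

lemma count_sum (L : List ℕ) (a : ℕ) :
    (∑ j : Fin L.length, if L.get j = a then 1 else 0) = L.count a := by
  induction L with
  | nil => simp
  | cons b t ih =>
      show (∑ j : Fin (t.length + 1), if (b :: t).get j = a then 1 else 0)
        = List.count a (b :: t)
      rw [Fin.sum_univ_succ]
      show (if b = a then 1 else 0) + (∑ j : Fin t.length, if t.get j = a then 1 else 0)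
        = (b :: t).count a
      rw [ih, List.count_cons]
      simp only [beq_iff_eq]
      omega

lemma N_wf (a : ℕ) (c : ConjClasses G) :
    N (wf f) (a, c) = a * Multiset.count a (f c).2.parts := by
  classical
  let F : (Σ _j : {j : Fin (Lf f c).length // (Lf f c).get j = a},
      ZMod ((Lf f c).get _j.1)) → {x : Tf f // Φ (wf f) x = (a, c)} :=
    fun p => ⟨⟨c, p.1.1, p.2⟩, by rw [Φ_wf, p.1.2]⟩
  have hbij : Function.Bijective F := by
    constructor
    · rintro ⟨⟨j1, hj1⟩, z1⟩ ⟨⟨j2, hj2⟩, z2⟩ h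
      have h0 : (⟨c, j1, z1⟩ : Tf f) = ⟨c, j2, z2⟩ := congrArg Subtype.val h
      have h1 := eq_of_heq (Sigma.mk.inj_iff.1 h0).2
      obtain ⟨h2, h3⟩ := Sigma.mk.inj_iff.1 h1
      subst h2
      exact Sigma.ext rfl h3
    · rintro ⟨⟨c', j, z⟩, h⟩
      rw [Φ_wf] at h
      have hc : c' = c := congrArg Prod.snd h
      subst hc
      exact ⟨⟨⟨j, congrArg Prod.fst h⟩, z⟩, rfl⟩
  rw [N, Nat.card_congr (Equiv.ofBijective F hbij).symm, Nat.card_eq_fintype_card,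
    Fintype.card_sigma]
  have hz : ∀ j : {j : Fin (Lf f c).length // (Lf f c).get j = a},
      Fintype.card (ZMod ((Lf f c).get j.1)) = a := fun j => by rw [ZMod.card, j.2]
  rw [Finset.sum_congr rfl (fun j _ => hz j), Finset.sum_const, smul_eq_mul,
    Finset.card_univ, Fintype.card_subtype, Finset.card_filter, count_sum]
  have : Multiset.count a (f c).2.parts = (Lf f c).count a := by
    conv_lhs => rw [← Multiset.coe_toList (f c).2.parts]
    rw [Multiset.coe_count]
    rfl
  rw [this, mul_comm]

end Standard


section Extract

variable [Fintype G]

noncomputable instance : DecidableEq (ConjClasses G) := Classical.decEq _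

variable [Fintype ι]

/-- the partition-valued data extracted from an element `w`. -/
noncomputable def fData (w : W G ι) : ConjClasses G → Σ m : ℕ, Nat.Partition m := fun c =>
  ⟨(((Finset.univ.val : Multiset (Q w)).filter
      (fun q => (ℓw w q).2 = c)).map (fun q => (ℓw w q).1)).sum,
    ⟨((Finset.univ.val.filter (fun q : Q w => (ℓw w q).2 = c)).map (fun q => (ℓw w q).1)),
      fun {i} hi => by
        obtain ⟨q, _, hq⟩ := Multiset.mem_map.1 hi
        rw [← hq]
        exact ℓw_fst_pos w q,
      rfl⟩⟩

lemma count_fData (w : W G ι) (a : ℕ) (c : ConjClasses G) :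
    Multiset.count a (fData w c).2.parts = Nat.card {q : Q w // ℓw w q = (a, c)} := by
  classical
  show Multiset.count a ((Finset.univ.val.filter (fun q : Q w => (ℓw w q).2 = c)).map
    (fun q => (ℓw w q).1)) = _
  rw [Multiset.count_map, Multiset.filter_filter]
  have hiff : ∀ q ∈ (Finset.univ.val : Multiset (Q w)),
      (a = (ℓw w q).1 ∧ (ℓw w q).2 = c) ↔ ℓw w q = (a, c) := by
    intro q _
    rw [Prod.ext_iff]
    constructor
    · rintro ⟨h1, h2⟩; exact ⟨h1.symm, h2⟩
    · rintro ⟨h1, h2⟩; exact ⟨h1.symm, h2⟩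
  rw [Multiset.filter_congr hiff]
  rw [Nat.card_eq_fintype_card, Fintype.card_subtype]
  rfl

lemma sum_fData (w : W G ι) : ∑ c : ConjClasses G, (fData w c).1 = Fintype.card ι := by
  classical
  have h1 : ∀ c, (fData w c).1
      = ∑ q ∈ Finset.univ.filter (fun q : Q w => (ℓw w q).2 = c), (ℓw w q).1 :=
    fun c => rfl
  rw [Finset.sum_congr rfl (fun c _ => h1 c)]
  rw [Finset.sum_fiberwise]
  have h2 : Fintype.card ι
      = Fintype.card (Σ q : Q w, {x : ι // Quotient.mk (sc w) x = q}) :=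
    Fintype.card_congr (Equiv.sigmaFiberEquiv (fun x : ι => Quotient.mk (sc w) x)).symm
  rw [h2, Fintype.card_sigma]
  exact Finset.sum_congr rfl (fun q _ => by
    rw [Fintype.card_congr (orbE w q), Fintype.card_fin])

lemma N_fData (w : W G ι) (v : ℕ × ConjClasses G) :
    N (wf (fData w)) v = N w v := by
  obtain ⟨a, c⟩ := v
  rw [N_wf, count_fData, N_card]

end Extract


section MainCount

variable [Fintype G] [Fintype ι]

lemma sigma_partition_ext (x y : Σ m : ℕ, Nat.Partition m)
    (h : x.2.parts = y.2.parts) : x = y := by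
  obtain ⟨m, p⟩ := x
  obtain ⟨m', p'⟩ := y
  have hp : p.parts = p'.parts := h
  have hm : m = m' := by rw [← p.parts_sum, ← p'.parts_sum, hp]
  subst hm
  have hpp : p = p' := by
    obtain ⟨parts, pos, psum⟩ := p
    obtain ⟨parts', pos', psum'⟩ := p'
    simp only at hp
    subst hp
    rfl
  rw [hpp]

lemma get_sum (L : List ℕ) : ∑ j : Fin L.length, L.get j = L.sum := by
  induction L with
  | nil => simp
  | cons b t ih =>
      show (∑ j : Fin (t.length + 1), (b :: t).get j) = (b :: t).sum
      rw [Fin.sum_univ_succ]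
      show b + (∑ j : Fin t.length, t.get j) = b + t.sum
      rw [ih]

lemma card_Tf (f : ConjClasses G → Σ m : ℕ, Nat.Partition m) :
    Fintype.card (Tf f) = ∑ c : ConjClasses G, (f c).1 := by
  unfold Tf
  rw [Fintype.card_sigma]
  apply Finset.sum_congr rfl
  intro c _
  rw [Fintype.card_sigma]
  have hz : ∀ j : Fin (Lf f c).length,
      Fintype.card (ZMod ((Lf f c).get j)) = (Lf f c).get j := fun j => ZMod.card _
  rw [Finset.sum_congr rfl (fun j _ => hz j), get_sum]
  show ((f c).2.parts.toList).sum = (f c).1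
  have h1 : (((f c).2.parts.toList : List ℕ) : Multiset ℕ).sum = (f c).2.parts.sum := by
    rw [Multiset.coe_toList]
  calc ((f c).2.parts.toList).sum
      = (((f c).2.parts.toList : List ℕ) : Multiset ℕ).sum := (Multiset.sum_coe _).symm
  _ = (f c).2.parts.sum := h1
  _ = (f c).1 := (f c).2.parts_sum

/-- the standard-form element attached to data summing to `card ι`. -/
noncomputable def SData (fd : {f : ConjClasses G → Σ m : ℕ, Nat.Partition m //
    ∑ c, (f c).1 = Fintype.card ι}) : W G ι :=
  mapW (Fintype.equivOfCardEq (by rw [card_Tf, fd.2])) (wf fd.1)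

lemma card_conjClasses_W :
    Nat.card (ConjClasses (W G ι)) =
      Nat.card {f : ConjClasses G → Σ m : ℕ, Nat.Partition m //
        ∑ c, (f c).1 = Fintype.card ι} := by
  classical
  refine (Nat.card_congr (Equiv.ofBijective
    (fun fd => ConjClasses.mk (SData fd)) ⟨?_, ?_⟩)).symm
  · intro fd fd' h
    have hconj : IsConj (SData fd) (SData fd') := ConjClasses.mk_eq_mk_iff_isConj.1 h
    have hNall : ∀ v, N (wf fd.1) v = N (wf fd'.1) v := by
      intro v
      have hv := N_conj hconj v
      unfold SData at hv
      rwa [N_mapW, N_mapW] at hv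
    apply Subtype.ext
    funext c
    apply sigma_partition_ext
    apply Multiset.ext.2
    intro a
    rcases Nat.eq_zero_or_pos a with rfl | hpos
    · rw [Multiset.count_eq_zero_of_notMem, Multiset.count_eq_zero_of_notMem]
      · intro hmem; exact absurd ((fd'.1 c).2.parts_pos hmem) (lt_irrefl 0)
      · intro hmem; exact absurd ((fd.1 c).2.parts_pos hmem) (lt_irrefl 0)
    · have hv := hNall (a, c)
      rw [N_wf, N_wf] at hv
      exact Nat.eq_of_mul_eq_mul_left hpos hv
  · intro cls
    obtain ⟨w, rfl⟩ := ConjClasses.mk_surjective cls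
    refine ⟨⟨fData w, sum_fData w⟩, ?_⟩
    apply ConjClasses.mk_eq_mk_iff_isConj.2
    apply isConj_iff_N.2
    intro v
    unfold SData
    rw [N_mapW]
    exact N_fData w v

end MainCount

end WreathAux

/-- Let `G` be a finite group with exactly `s` conjugacy classes. Then the number of
conjugacy classes of the wreath product `G ≀ Sₙ` equals the sum, over all `s`-tuples
`(n_1, …, n_s)` of natural numbers with `n_1 + ⋯ + n_s = n`, of the products
`p(n_1) ⋯ p(n_s)`, where `p(m)` is the number of partitions of `m`. -/
theorem card_conjClasses_wreathProduct (G : Type*) [Group G] [Fintype G]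
    (s n : ℕ) (hs : Nat.card (ConjClasses G) = s) :
    Nat.card (ConjClasses (WreathProduct G n)) =
      ∑ t ∈ Finset.Nat.antidiagonalTuple s n,
        ∏ i : Fin s, Nat.card (Nat.Partition (t i)) := by
  classical
  have key : Nat.card (ConjClasses (WreathAux.W G (Fin n))) =
      Nat.card {f : ConjClasses G → Σ m : ℕ, Nat.Partition m //
        ∑ c, (f c).1 = Fintype.card (Fin n)} := WreathAux.card_conjClasses_W
  have hW : Nat.card (ConjClasses (WreathProduct G n))
      = Nat.card (ConjClasses (WreathAux.W G (Fin n))) := rfl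
  rw [hW, key, Fintype.card_fin]
  have hfin : Fintype.card (ConjClasses G) = s := by
    rw [← Nat.card_eq_fintype_card]; exact hs
  let e : ConjClasses G ≃ Fin s := Fintype.equivFinOfCardEq hfin
  have E1 : {f : ConjClasses G → Σ m : ℕ, Nat.Partition m // ∑ c, (f c).1 = n}
      ≃ {F : Fin s → Σ m : ℕ, Nat.Partition m // ∑ i, (F i).1 = n} := by
    refine Equiv.subtypeEquiv (Equiv.arrowCongr e (Equiv.refl _)) ?_
    intro f
    have hc : ∀ i, (Equiv.arrowCongr e (Equiv.refl _) f) i = f (e.symm i) := fun i => rfl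
    have hsum : (∑ i, ((Equiv.arrowCongr e (Equiv.refl _) f) i).1)
        = ∑ c, (f c).1 := by
      rw [Finset.sum_congr rfl (fun i _ => by rw [hc])]
      exact Equiv.sum_comp e.symm (fun c => (f c).1)
    rw [hsum]
  have E2 : {F : Fin s → Σ m : ℕ, Nat.Partition m // ∑ i, (F i).1 = n}
      ≃ Σ t : {t : Fin s → ℕ // t ∈ Finset.Nat.antidiagonalTuple s n},
          ∀ i : Fin s, Nat.Partition (t.1 i) :=
    { toFun := fun F => ⟨⟨fun i => (F.1 i).1,
        Finset.Nat.mem_antidiagonalTuple.2 F.2⟩, fun i => (F.1 i).2⟩,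
      invFun := fun p => ⟨fun i => ⟨p.1.1 i, p.2 i⟩,
        Finset.Nat.mem_antidiagonalTuple.1 p.1.2⟩,
      left_inv := fun F => rfl,
      right_inv := fun p => rfl }
  rw [Nat.card_congr (E1.trans E2), Nat.card_eq_fintype_card, Fintype.card_sigma,
    ← Finset.sum_coe_sort (Finset.Nat.antidiagonalTuple s n)
      (fun t => ∏ i : Fin s, Nat.card (Nat.Partition (t i)))]
  exact Finset.sum_congr rfl (fun t _ => by
    rw [Fintype.card_pi]
    exact Finset.prod_congr rfl (fun i _ => (Nat.card_eq_fintype_card).symm))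
end
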